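/- arXiv:2503.03859 — 5 statements merged into one kernel-verified Lean document; each statement's English description precedes it below -/
import Mathlib

section
/- Let r₀ ∈ ℝ, λ > 0, a ∈ (r₀, +∞], and let μ : [r₀,∞) → ℝ be non-increasing. Let β : [r₀,a) → ℝ be locally absolutely continuous with β(r₀) = β̄₋(r₀) and β'(r) = (β(r) − β̄₋(r))·(β(r) − β₊(r)) for almost every r ∈ [r₀,a). Then β(r) ≤ β̄₋(r) for every r ∈ [r₀,a). -/
open MeasureTheory Filter Set intervalIntegral

/-- `β₋(r) = −μ(r)/2 − √(μ(r)²/4 + λ)`. -/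
noncomputable def betaMinus (lam : ℝ) (μ : ℝ → ℝ) (r : ℝ) : ℝ :=
  -μ r / 2 - Real.sqrt (μ r ^ 2 / 4 + lam)

/-- `β₊(r) = −μ(r)/2 + √(μ(r)²/4 + λ)`. -/
noncomputable def betaPlus (lam : ℝ) (μ : ℝ → ℝ) (r : ℝ) : ℝ :=
  -μ r / 2 + Real.sqrt (μ r ^ 2 / 4 + lam)

/-- `β̄₋(r) = limsup_{t→r} β₋(t)` (within the domain `[r₀,∞)`), the right-continuous
(upper semicontinuous) modification of `β₋`. -/
noncomputable def betaMinusBar (r₀ lam : ℝ) (μ : ℝ → ℝ) (r : ℝ) : ℝ :=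
  Filter.limsup (betaMinus lam μ) (nhdsWithin r (Set.Ici r₀))

/-! Since `m ↦ √(m²/4 + λ)` is `1/2`-Lipschitz, `β₋` and `β₊` are non-decreasing for non-increasing
`μ`, hence so is `β̄₋`; moreover `β̄₋ < 0 < β₊`. Fix `r`. While `β(t)` stays in the band
`(β̄₋(r), β₊(r₀))` for `t ≤ r`, the ODE gives `β' ≤ 0`, because `β − β̄₋(t) ≥ β − β̄₋(r) > 0` and
`β − β₊(t) ≤ β − β₊(r₀) < 0`. As `β(r₀) = β̄₋(r₀) ≤ β̄₋(r)`, if `β` ever entered the band, then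
between the last time `β ≤ β̄₋(r)` and the first time `β` reaches a level inside the band it would
both rise and have `β' ≤ 0`. -/

open Topology

namespace MonotoneOn

variable {f : ℝ → ℝ} {r₀ t : ℝ}

lemma limsup_nhdsWithin_Ici_le (hf : MonotoneOn f (Ici r₀)) (ht : r₀ ≤ t) {x : ℝ}
    (htx : t < x) : limsup f (𝓝[Ici r₀] t) ≤ f x := by
  have : (𝓝[Ici r₀] t).NeBot := nhdsWithin_Ici_neBot ht
  refine limsup_le_of_le (isCoboundedUnder_le_of_eventually_le (x := f r₀) _ ?_) ?_
  · filter_upwards [self_mem_nhdsWithin] with y hy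
    exact hf self_mem_Ici hy hy
  · filter_upwards [self_mem_nhdsWithin, nhdsWithin_le_nhds (eventually_lt_nhds htx)]
      with y hy hyx
    exact hf hy (ht.trans htx.le) hyx.le

lemma le_limsup_nhdsWithin_Ici (hf : MonotoneOn f (Ici r₀)) (ht : r₀ ≤ t) :
    f t ≤ limsup f (𝓝[Ici r₀] t) := by
  have : (𝓝[Ici t] t).NeBot := nhdsWithin_Ici_neBot le_rfl
  refine le_limsup_of_frequently_le ?_ ?_
  · have h : ∀ᶠ y in 𝓝[Ici t] t, f t ≤ f y := by
      filter_upwards [self_mem_nhdsWithin] with y hy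
      exact hf ht (ht.trans hy) hy
    exact h.frequently.filter_mono (nhdsWithin_mono t (Ici_subset_Ici.mpr ht))
  · refine ⟨f (t + 1), eventually_map.mpr ?_⟩
    filter_upwards [self_mem_nhdsWithin,
      nhdsWithin_le_nhds (eventually_lt_nhds (lt_add_one t))] with y hy hyt
    exact hf hy (ht.trans (lt_add_one t).le) hyt.le

end MonotoneOn

lemma abs_div_two_lt_sqrt {c : ℝ} (hc : 0 < c) (x : ℝ) : |x| / 2 < √(x ^ 2 / 4 + c) := by
  have h : √((x / 2) ^ 2) < √(x ^ 2 / 4 + c) := Real.sqrt_lt_sqrt (sq_nonneg _) (by linarith)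
  rwa [Real.sqrt_sq_eq_abs, abs_div, abs_two] at h

lemma abs_sqrt_sq_div_four_add_sub_le {c : ℝ} (hc : 0 ≤ c) (x y : ℝ) :
    |√(x ^ 2 / 4 + c) - √(y ^ 2 / 4 + c)| ≤ |x - y| / 2 := by
  -- `√(x²/4 + c)` is the Euclidean norm of `(x/2, √c)`, hence `1/2`-Lipschitz in `x`.
  have key : ∀ x y : ℝ, √(x ^ 2 / 4 + c) ≤ √(y ^ 2 / 4 + c) + |x - y| / 2 := by
    intro x y
    have hy : |y| / 2 ≤ √(y ^ 2 / 4 + c) := by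
      have h := Real.abs_le_sqrt (show (y / 2) ^ 2 ≤ y ^ 2 / 4 + c by linarith)
      rwa [abs_div, abs_two] at h
    have hsq := Real.sq_sqrt (show 0 ≤ y ^ 2 / 4 + c by positivity)
    rw [Real.sqrt_le_left (by positivity)]
    nlinarith [mul_le_mul_of_nonneg_left hy (abs_nonneg (x - y)), abs_mul (x - y) y,
      le_abs_self ((x - y) * y), sq_abs (x - y)]
  rw [abs_sub_le_iff]
  constructor
  · linarith [key x y]
  · linarith [key y x, abs_sub_comm x y]

lemma betaMinus_neg {lam : ℝ} (hlam : 0 < lam) (μ : ℝ → ℝ) (r : ℝ) :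
    betaMinus lam μ r < 0 := by
  unfold betaMinus
  linarith [abs_div_two_lt_sqrt hlam (μ r), neg_abs_le (μ r)]

lemma betaPlus_pos {lam : ℝ} (hlam : 0 < lam) (μ : ℝ → ℝ) (r : ℝ) :
    0 < betaPlus lam μ r := by
  unfold betaPlus
  linarith [abs_div_two_lt_sqrt hlam (μ r), le_abs_self (μ r)]

section
variable {r₀ lam : ℝ} {μ : ℝ → ℝ}

lemma betaMinus_monotoneOn (hlam : 0 ≤ lam) (hμ : AntitoneOn μ (Ici r₀)) :
    MonotoneOn (betaMinus lam μ) (Ici r₀) := by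
  intro x hx y hy hxy
  have := abs_sqrt_sq_div_four_add_sub_le hlam (μ y) (μ x)
  rw [abs_of_nonpos (sub_nonpos.2 (hμ hx hy hxy))] at this
  unfold betaMinus
  linarith [le_abs_self (√(μ y ^ 2 / 4 + lam) - √(μ x ^ 2 / 4 + lam))]

lemma betaPlus_monotoneOn (hlam : 0 ≤ lam) (hμ : AntitoneOn μ (Ici r₀)) :
    MonotoneOn (betaPlus lam μ) (Ici r₀) := by
  intro x hx y hy hxy
  have := abs_sqrt_sq_div_four_add_sub_le hlam (μ y) (μ x)
  rw [abs_of_nonpos (sub_nonpos.2 (hμ hx hy hxy))] at this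
  unfold betaPlus
  linarith [neg_abs_le (√(μ y ^ 2 / 4 + lam) - √(μ x ^ 2 / 4 + lam))]

lemma betaMinusBar_monotoneOn (hlam : 0 ≤ lam) (hμ : AntitoneOn μ (Ici r₀)) :
    MonotoneOn (betaMinusBar r₀ lam μ) (Ici r₀) := by
  intro s hs t ht hst
  rcases hst.lt_or_eq with hst | rfl
  · have hβ := betaMinus_monotoneOn hlam hμ
    exact (hβ.limsup_nhdsWithin_Ici_le hs hst).trans (hβ.le_limsup_nhdsWithin_Ici ht)
  · rfl

lemma betaMinusBar_neg (hlam : 0 < lam) (hμ : AntitoneOn μ (Ici r₀)) {t : ℝ}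
    (ht : r₀ ≤ t) : betaMinusBar r₀ lam μ t < 0 :=
  ((betaMinus_monotoneOn hlam.le hμ).limsup_nhdsWithin_Ici_le ht (lt_add_one t)).trans_lt
    (betaMinus_neg hlam μ (t + 1))

end

section
variable {f f' : ℝ → ℝ} {a b c d : ℝ}

lemma continuousOn_Icc_of_eq_add_integral (hab : a ≤ b)
    (hf : ∀ t ∈ Icc a b, f t = f a + ∫ x in a..t, f' x)
    (hint : IntervalIntegrable f' volume a b) : ContinuousOn f (Icc a b) := by
  have h := continuousOn_primitive_interval' hint (left_mem_uIcc (a := a) (b := b))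
  rw [uIcc_of_le hab] at h
  exact (continuousOn_const.add h).congr hf

lemma le_of_eq_add_integral_of_ae_nonpos_above (hab : a ≤ b)
    (hf : ∀ t ∈ Icc a b, f t = f a + ∫ x in a..t, f' x)
    (hint : IntervalIntegrable f' volume a b) (ha : f a ≤ c)
    (hf' : ∀ᵐ t, t ∈ Ioo a b → c < f t → f' t ≤ 0) : f b ≤ c := by
  set S := Icc a b ∩ f ⁻¹' Iic c
  have hS : IsClosed S :=
    (continuousOn_Icc_of_eq_add_integral hab hf hint).preimage_isClosed_of_isClosed
      isClosed_Icc isClosed_Iic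
  have hSbdd : BddAbove S := ⟨b, fun t ht => ht.1.2⟩
  obtain ⟨⟨has, hsb⟩, hfs⟩ : sSup S ∈ S := hS.csSup_mem ⟨a, ⟨le_rfl, hab⟩, ha⟩ hSbdd
  set s := sSup S
  have hgt : ∀ t ∈ Ioo s b, c < f t := fun t ht => not_le.1 fun hle =>
    (le_csSup hSbdd ⟨⟨has.trans ht.1.le, ht.2.le⟩, hle⟩).not_gt ht.1
  have hnonpos : ∫ x in s..b, f' x ≤ 0 := by
    rw [integral_of_le hsb, integral_Ioc_eq_integral_Ioo]
    refine integral_nonpos_of_ae ?_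
    filter_upwards [ae_restrict_mem measurableSet_Ioo, ae_restrict_of_ae hf'] with t ht ht'
    exact ht' ⟨has.trans_lt ht.1, ht.2⟩ (hgt t ht)
  have hsplit : f b = f s + ∫ x in s..b, f' x := by
    rw [hf b ⟨hab, le_rfl⟩, hf s ⟨has, hsb⟩, ← integral_interval_sub_left hint
      (hint.mono_set (uIcc_subset_uIcc_left (mem_uIcc_of_le has hsb)))]
    ring
  linarith [show f s ≤ c from hfs]

lemma le_of_eq_add_integral_of_ae_nonpos_between (hab : a ≤ b) (hcd : c < d)
    (hf : ∀ t ∈ Icc a b, f t = f a + ∫ x in a..t, f' x)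
    (hint : IntervalIntegrable f' volume a b) (ha : f a ≤ c)
    (hf' : ∀ᵐ t, t ∈ Ioo a b → c < f t → f t < d → f' t ≤ 0) : f b ≤ c := by
  by_contra! hb
  obtain ⟨e, hce, he⟩ := exists_between (lt_min hb hcd)
  set U := Icc a b ∩ f ⁻¹' Ici e
  have hU : IsClosed U :=
    (continuousOn_Icc_of_eq_add_integral hab hf hint).preimage_isClosed_of_isClosed
      isClosed_Icc isClosed_Ici
  have hUbdd : BddBelow U := ⟨a, fun t ht => ht.1.1⟩
  obtain ⟨⟨hau, hub⟩, hfu⟩ : sInf U ∈ U :=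
    hU.csInf_mem ⟨b, ⟨hab, le_rfl⟩, he.le.trans (min_le_left _ _)⟩ hUbdd
  set u := sInf U
  have hlt : ∀ t ∈ Ioo a u, f t < e := fun t ht => not_le.1 fun hle =>
    (csInf_le hUbdd ⟨⟨ht.1.le, ht.2.le.trans hub⟩, hle⟩).not_gt ht.2
  -- Before its first visit `u` to the level `e ∈ (c, d)`, `f` stays below `d`.
  have hfu_le : f u ≤ c := by
    refine le_of_eq_add_integral_of_ae_nonpos_above hau (fun t ht => hf t ⟨ht.1, ht.2.trans hub⟩)
      (hint.mono_set (uIcc_subset_uIcc_left (mem_uIcc_of_le hau hub))) ha ?_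
    filter_upwards [hf'] with t ht htu hct
    exact ht ⟨htu.1, htu.2.trans_le hub⟩ hct ((hlt t htu).trans (he.trans_le (min_le_right _ _)))
  linarith [show e ≤ f u from hfu]

end

theorem riccati_solution_le_betaMinusBar_general
    (r₀ lam : ℝ) (hlam : 0 < lam)
    (a : EReal)
    (μ : ℝ → ℝ) (hμ : AntitoneOn μ (Set.Ici r₀))
    (β β' : ℝ → ℝ)
    -- β is locally absolutely continuous on [r₀, a): it is the integral of a locally
    -- integrable function β'
    (hAC : ∀ r, r₀ ≤ r → (r : EReal) < a →
      IntervalIntegrable β' volume r₀ r ∧ β r = β r₀ + ∫ t in r₀..r, β' t)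
    -- β satisfies the ODE β' = (β − β̄₋)(β − β₊) almost everywhere on [r₀, a)
    (hode : ∀ᵐ t ∂(volume : Measure ℝ), r₀ ≤ t → (t : EReal) < a →
      β' t = (β t - betaMinusBar r₀ lam μ t) * (β t - betaPlus lam μ t))
    -- initial condition β(r₀) = β̄₋(r₀)
    (hinit : β r₀ = betaMinusBar r₀ lam μ r₀) :
    ∀ r, r₀ ≤ r → (r : EReal) < a → β r ≤ betaMinusBar r₀ lam μ r := by
  intro r hr hra
  have hta : ∀ t ∈ Icc r₀ r, (t : EReal) < a := fun t ht =>
    (EReal.coe_le_coe_iff.2 ht.2).trans_lt hra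
  have hβbar := betaMinusBar_monotoneOn hlam.le hμ
  refine le_of_eq_add_integral_of_ae_nonpos_between hr
    ((betaMinusBar_neg hlam hμ hr).trans (betaPlus_pos hlam μ r₀))
    (fun t ht => (hAC t ht.1 (hta t ht)).2) (hAC r hr hra).1
    (hinit ▸ hβbar self_mem_Ici hr hr) ?_
  filter_upwards [hode] with t hode_t ht hct htd
  have htr : t ∈ Icc r₀ r := Ioo_subset_Icc_self ht
  rw [hode_t htr.1 (hta t htr)]
  refine mul_nonpos_of_nonneg_of_nonpos ?_ ?_
  · linarith [hβbar htr.1 (mem_Ici.2 (htr.1.trans htr.2)) htr.2]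
  · linarith [betaPlus_monotoneOn hlam.le hμ self_mem_Ici htr.1 htr.1]

/-- A locally absolutely continuous solution of
`β' = (β − β̄₋)(β − β₊)` on `[r₀, a)` with `β(r₀) = β̄₋(r₀)` satisfies `β ≤ β̄₋`. -/
theorem riccati_solution_le_betaMinusBar
    (r₀ lam : ℝ) (hlam : 0 < lam)
    (a : EReal) (ha : (r₀ : EReal) < a)
    (μ : ℝ → ℝ) (hμ : AntitoneOn μ (Set.Ici r₀))
    (β β' : ℝ → ℝ)
    -- β is locally absolutely continuous on [r₀, a): it is the integral of a locally
    -- integrable function β'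
    (hAC : ∀ r, r₀ ≤ r → (r : EReal) < a →
      IntervalIntegrable β' volume r₀ r ∧ β r = β r₀ + ∫ t in r₀..r, β' t)
    -- β satisfies the ODE β' = (β − β̄₋)(β − β₊) almost everywhere on [r₀, a)
    (hode : ∀ᵐ t ∂(volume : Measure ℝ), r₀ ≤ t → (t : EReal) < a →
      β' t = (β t - betaMinusBar r₀ lam μ t) * (β t - betaPlus lam μ t))
    -- initial condition β(r₀) = β̄₋(r₀)
    (hinit : β r₀ = betaMinusBar r₀ lam μ r₀) :
    ∀ r, r₀ ≤ r → (r : EReal) < a → β r ≤ betaMinusBar r₀ lam μ r :=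
  riccati_solution_le_betaMinusBar_general r₀ lam hlam a μ hμ β β' hAC hode hinit
end

section
/- For every γ ∈ [1,∞) there exists a constant c_γ > 0 such that for all α, β > 0: ∫₀^1 t^{−γ} e^{−αt − β/t} dt ≤ c_γ · L_γ(β) · β^{−(γ−1)} · (1 + 2√(αβ))^{−(3/2 − γ)} · e^{−2√(αβ)}, where L_γ(β) = log(e + 1/β) if γ = 1 and L_γ(β) = 1 if γ > 1. -/
open MeasureTheory Set Real


lemma rpow_le_exp_aux {c ε u : ℝ} (hc : 0 < c) (hε : 0 < ε) (hu : 0 < u) :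
    u ^ c ≤ (c / ε) ^ c * exp (ε * u) := by
  rw [← Real.exp_log (show (0:ℝ) < (c/ε)^c by positivity), ← Real.exp_add,
    Real.rpow_def_of_pos hu, Real.log_rpow (show (0:ℝ) < c/ε by positivity)]
  apply Real.exp_le_exp.2
  have h := Real.log_le_sub_one_of_pos (show 0 < u * ε / c by positivity)
  rw [Real.log_div (by positivity) hc.ne', Real.log_mul hu.ne' hε.ne'] at h
  have h2 : Real.log (c / ε) = Real.log c - Real.log ε :=
    Real.log_div hc.ne' hε.ne'
  have hdiv : u * ε / c * c = u * ε := by field_simp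
  nlinarith [mul_le_mul_of_nonneg_right h hc.le]

lemma integrableOn_aux (γ b : ℝ) (hb : 0 < b) :
    IntegrableOn (fun u : ℝ => u ^ (γ - 2) * exp (-(b * u))) (Ioi 1) := by
  have hmeas : AEStronglyMeasurable (fun u : ℝ => u ^ (γ - 2) * exp (-(b * u)))
      (volume.restrict (Ioi 1)) := by
    apply ContinuousOn.aestronglyMeasurable _ measurableSet_Ioi
    apply ContinuousOn.mul
    · exact ContinuousOn.rpow_const continuousOn_id
        (fun x hx => Or.inl (ne_of_gt (lt_trans one_pos hx)))
    · exact ((continuous_const.mul continuous_id).neg.rexp).continuousOn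
  set K : ℝ := max 1 (((γ-2) / (b/2)) ^ (γ-2)) with hK
  have hKpos : 0 < K := lt_of_lt_of_le one_pos (le_max_left _ _)
  apply Integrable.mono ((exp_neg_integrableOn_Ioi 1 (half_pos hb)).const_mul K) hmeas
  filter_upwards [ae_restrict_mem measurableSet_Ioi] with u hu
  have hu0 : (0:ℝ) < u := lt_trans one_pos hu
  have hnn : (0:ℝ) ≤ u ^ (γ - 2) * exp (-(b * u)) := by positivity
  rw [Real.norm_eq_abs, abs_of_nonneg hnn, Real.norm_eq_abs]
  have hKe : (0:ℝ) ≤ K * exp (-(b/2) * u) := by positivity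
  rw [abs_of_nonneg hKe]
  have hexpeq : exp (-(b/2) * u) = exp (-(b/2*u)) := by ring_nf
  rcases le_or_gt γ 2 with h2 | h2
  · have h1 : u ^ (γ - 2) ≤ 1 :=
      Real.rpow_le_one_of_one_le_of_nonpos hu.le (by linarith)
    have h5 : exp (-(b*u)) ≤ exp (-(b/2) * u) := by
      apply Real.exp_le_exp.2; nlinarith
    calc u ^ (γ-2) * exp (-(b*u)) ≤ 1 * exp (-(b/2) * u) :=
          mul_le_mul h1 h5 (Real.exp_pos _).le zero_le_one
      _ ≤ K * exp (-(b/2) * u) :=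
          mul_le_mul_of_nonneg_right (le_max_left _ _) (Real.exp_pos _).le
  · have h1 : u ^ (γ - 2) ≤ ((γ-2) / (b/2)) ^ (γ-2) * exp (b/2 * u) :=
      rpow_le_exp_aux (by linarith) (half_pos hb) hu0
    have h3 : ((γ-2) / (b/2)) ^ (γ-2) ≤ K := le_max_right _ _
    have h4 : exp (-(b*u)) * exp (b/2 * u) = exp (-(b/2 * u)) := by
      rw [← Real.exp_add]; ring_nf
    calc u ^ (γ-2) * exp (-(b*u)) ≤ (((γ-2) / (b/2)) ^ (γ-2) * exp (b/2*u)) * exp (-(b*u)) := by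
          apply mul_le_mul_of_nonneg_right _ (Real.exp_pos _).le
          exact h1
      _ = ((γ-2) / (b/2)) ^ (γ-2) * exp (-(b/2*u)) := by rw [mul_assoc, mul_comm (exp _), h4]
      _ ≤ K * exp (-(b/2) * u) := by
          rw [hexpeq]
          apply mul_le_mul_of_nonneg_right h3 (Real.exp_pos _).le

lemma inv_image_Ioi : Inv.inv '' Ioi (1:ℝ) = Ioo 0 1 := by
  ext y
  constructor
  · rintro ⟨u, hu, rfl⟩
    simp only [mem_Ioi] at hu
    exact ⟨inv_pos.2 (lt_trans one_pos hu), inv_lt_one_of_one_lt₀ hu⟩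
  · rintro ⟨h0, h1⟩
    exact ⟨y⁻¹, mem_Ioi.2 ((one_lt_inv₀ h0).2 h1), inv_inv y⟩

lemma deriv_aux (u : ℝ) (hu : u ∈ Ioi (1:ℝ)) :
    HasDerivWithinAt Inv.inv (-(u^2)⁻¹) (Ioi 1) u :=
  (hasDerivAt_inv (ne_of_gt (lt_trans one_pos hu))).hasDerivWithinAt

lemma integrand_eq (γ b : ℝ) (u : ℝ) (hu : u ∈ Ioi (1:ℝ)) :
    |(-(u^2)⁻¹)| • ((u⁻¹) ^ (-γ) * exp (-(b / u⁻¹))) = u ^ (γ - 2) * exp (-(b * u)) := by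
  have hu0 : (0:ℝ) < u := lt_trans one_pos (mem_Ioi.1 hu)
  have h1 : (u⁻¹ : ℝ) ^ (-γ) = u ^ γ := by
    rw [Real.inv_rpow hu0.le, ← Real.rpow_neg hu0.le, neg_neg]
  have h2 : b / u⁻¹ = b * u := by field_simp
  have h3 : |(-(u^2)⁻¹ : ℝ)| = (u^2)⁻¹ := by
    rw [abs_neg, abs_of_nonneg]; positivity
  rw [smul_eq_mul, h1, h2, h3]
  have h4 : ((u^2)⁻¹ : ℝ) = u ^ (-2 : ℝ) := by
    rw [← Real.rpow_natCast u 2, ← Real.rpow_neg hu0.le]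
    norm_num
  rw [h4, ← mul_assoc, ← Real.rpow_add hu0]
  ring_nf

lemma J_eq (γ b : ℝ) :
    (∫ t in Ioc (0:ℝ) 1, t ^ (-γ) * exp (-(b / t))) =
      ∫ u in Ioi (1:ℝ), u ^ (γ - 2) * exp (-(b * u)) := by
  rw [integral_Ioc_eq_integral_Ioo, ← inv_image_Ioi,
    integral_image_eq_integral_abs_deriv_smul measurableSet_Ioi deriv_aux
      (fun a _ b _ h => inv_injective h)]
  exact setIntegral_congr_fun measurableSet_Ioi (fun u hu => integrand_eq γ b u hu)

lemma J_integrableOn (γ b : ℝ) (hb : 0 < b) :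
    IntegrableOn (fun t : ℝ => t ^ (-γ) * exp (-(b / t))) (Ioc 0 1) := by
  rw [integrableOn_Ioc_iff_integrableOn_Ioo, ← inv_image_Ioi,
    integrableOn_image_iff_integrableOn_abs_deriv_smul measurableSet_Ioi deriv_aux
      (fun a _ b _ h => inv_injective h)]
  exact ((integrableOn_aux γ b hb).congr_fun (fun u hu => (integrand_eq γ b u hu).symm)
    measurableSet_Ioi)

lemma J1_bound {b : ℝ} (hb : 0 < b) :
    (∫ u in Ioi (1:ℝ), u ^ ((1:ℝ) - 2) * exp (-(b * u))) ≤
      2 * Real.log (Real.exp 1 + 1 / b) := by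
  set M : ℝ := max 1 b⁻¹ with hM
  have h1M : (1:ℝ) ≤ M := le_max_left _ _
  have hMpos : (0:ℝ) < M := lt_of_lt_of_le one_pos h1M
  have hint : IntegrableOn (fun u : ℝ => u ^ ((1:ℝ)-2) * exp (-(b*u))) (Ioi 1) := by
    have := integrableOn_aux 1 b hb
    norm_num at this ⊢
    exact this
  have hsplit : Ioc (1:ℝ) M ∪ Ioi M = Ioi 1 := Ioc_union_Ioi_eq_Ioi h1M
  have hlog1 : (1:ℝ) ≤ Real.log (Real.exp 1 + 1/b) := by
    have : Real.exp 1 ≤ Real.exp 1 + 1/b := le_add_of_nonneg_right (by positivity)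
    calc (1:ℝ) = Real.log (Real.exp 1) := (Real.log_exp 1).symm
      _ ≤ _ := Real.log_le_log (Real.exp_pos 1) this
  have hMle : M ≤ Real.exp 1 + 1/b := by
    apply max_le
    · linarith [Real.add_one_le_exp (1:ℝ), (by positivity : (0:ℝ) ≤ 1/b)]
    · rw [one_div]
      have : (0:ℝ) < Real.exp 1 := Real.exp_pos 1
      linarith
  have hB1 : (∫ u in Ioc (1:ℝ) M, u ^ ((1:ℝ)-2) * exp (-(b*u))) ≤ Real.log M := by
    have hval : (∫ u in Ioc (1:ℝ) M, u⁻¹) = Real.log M := by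
      rw [← intervalIntegral.integral_of_le h1M, integral_inv, div_one]
      intro h
      rcases (mem_uIcc.1 h) with ⟨h1, _⟩ | ⟨_, h2⟩ <;> linarith
    rw [← hval]
    have hginto : IntegrableOn (fun u : ℝ => u⁻¹) (Ioc 1 M) := by
      apply (ContinuousOn.integrableOn_Icc _).mono_set Ioc_subset_Icc_self
      exact continuousOn_inv₀.mono (fun x hx => by
        simp only [mem_compl_iff, mem_singleton_iff]
        intro h0; rw [h0] at hx; exact absurd hx.1 (by norm_num))
    apply setIntegral_mono_on (hint.mono_set _) hginto measurableSet_Ioc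
    · intro u hu
      have hu0 : (0:ℝ) < u := lt_trans one_pos hu.1
      have h1 : u ^ ((1:ℝ)-2) = u⁻¹ := by
        norm_num
        exact Real.rpow_neg_one u
      rw [h1]
      calc u⁻¹ * exp (-(b*u)) ≤ u⁻¹ * 1 := by
            apply mul_le_mul_of_nonneg_left _ (inv_nonneg.2 hu0.le)
            exact Real.exp_le_one_iff.2 (by nlinarith)
        _ = u⁻¹ := mul_one _
    · rw [← hsplit]; exact subset_union_left
  have hB2 : (∫ u in Ioi M, u ^ ((1:ℝ)-2) * exp (-(b*u))) ≤ 1 := by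
    have hgint : IntegrableOn (fun u : ℝ => b * exp (-(b*u))) (Ioi M) := by
      have h0 : IntegrableOn (fun x : ℝ => b * exp (-b * x)) (Ioi M) :=
        (exp_neg_integrableOn_Ioi M hb).const_mul b
      exact h0.congr_fun (fun x _ => by ring_nf) measurableSet_Ioi
    have hmono : (∫ u in Ioi M, u ^ ((1:ℝ)-2) * exp (-(b*u))) ≤
        ∫ u in Ioi M, b * exp (-(b*u)) := by
      apply setIntegral_mono_on (hint.mono_set _) hgint measurableSet_Ioi
      · intro u hu
        have huM : M < u := hu
        have hu0 : (0:ℝ) < u := lt_trans hMpos huM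
        have h1 : u ^ ((1:ℝ)-2) = u⁻¹ := by norm_num; exact Real.rpow_neg_one u
        rw [h1]
        apply mul_le_mul_of_nonneg_right _ (Real.exp_pos _).le
        have hbin : b⁻¹ ≤ M := le_max_right _ _
        rw [inv_le_comm₀ hu0 hb]
        exact le_trans hbin huM.le
      · rw [← hsplit]; exact subset_union_right
    have hval : (∫ u in Ioi M, b * exp (-(b*u))) = exp (-(b*M)) := by
      rw [integral_const_mul]
      have h := integral_comp_mul_left_Ioi (fun x => exp (-x)) M hb
      simp only [smul_eq_mul] at h
      rw [h, integral_exp_neg_Ioi]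
      field_simp
    calc (∫ u in Ioi M, u ^ ((1:ℝ)-2) * exp (-(b*u))) ≤ exp (-(b*M)) := hval ▸ hmono
      _ ≤ 1 := Real.exp_le_one_iff.2 (neg_nonpos.2 (by positivity))
  rw [← hsplit, setIntegral_union (Ioc_disjoint_Ioi le_rfl) measurableSet_Ioi
    (hint.mono_set (by rw [← hsplit]; exact subset_union_left))
    (hint.mono_set (by rw [← hsplit]; exact subset_union_right))]
  have hlogM : Real.log M ≤ Real.log (Real.exp 1 + 1/b) :=
    Real.log_le_log hMpos hMle
  refine le_trans (add_le_add hB1 hB2) ?_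
  linarith

lemma J2_bound {γ b : ℝ} (hγ : 1 < γ) (hb : 0 < b) :
    (∫ u in Ioi (1:ℝ), u ^ (γ - 2) * exp (-(b * u))) ≤ Real.Gamma (γ-1) * b ^ (1-γ) := by
  have hγ1 : (0:ℝ) < γ - 1 := by linarith
  have hint0 : IntegrableOn (fun u : ℝ => u ^ (γ-2) * exp (-(b*u))) (Ioi 0) := by
    have hg : IntegrableOn (fun x : ℝ => exp (-x) * x ^ (γ-2)) (Ioi 0) := by
      have := Real.GammaIntegral_convergent hγ1
      rwa [show γ-1-1 = γ-2 by ring] at this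
    have hg2 : IntegrableOn (fun x : ℝ => exp (-(b*x)) * (b*x) ^ (γ-2)) (Ioi 0) := by
      have := (integrableOn_Ioi_comp_mul_left_iff
        (fun x : ℝ => exp (-x) * x ^ (γ-2)) 0 hb).2 (by rwa [mul_zero])
      exact this
    have h3 : IntegrableOn
        (fun x : ℝ => b ^ (2-γ) * (exp (-(b*x)) * (b*x) ^ (γ-2))) (Ioi 0) :=
      hg2.const_mul _
    apply h3.congr_fun _ measurableSet_Ioi
    intro x hx
    have hx0 : (0:ℝ) < x := hx
    have hbx : (0:ℝ) < b * x := by positivity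
    simp only []
    rw [Real.mul_rpow hb.le hx0.le]
    have hbb : b ^ (2-γ) * b ^ (γ-2) = 1 := by
      rw [← Real.rpow_add hb]; norm_num
    calc b ^ (2-γ) * (exp (-(b*x)) * (b ^ (γ-2) * x ^ (γ-2)))
        = (b ^ (2-γ) * b ^ (γ-2)) * (x ^ (γ-2) * exp (-(b*x))) := by ring
      _ = x ^ (γ-2) * exp (-(b*x)) := by rw [hbb, one_mul]
  have hmono : (∫ u in Ioi (1:ℝ), u ^ (γ-2) * exp (-(b*u))) ≤
      ∫ u in Ioi (0:ℝ), u ^ (γ-2) * exp (-(b*u)) := by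
    apply setIntegral_mono_set hint0 _ (HasSubset.Subset.eventuallyLE (Ioi_subset_Ioi zero_le_one))
    filter_upwards [ae_restrict_mem measurableSet_Ioi] with x hx
    have hx0 : (0:ℝ) < x := hx
    positivity
  have hval : (∫ u in Ioi (0:ℝ), u ^ (γ-2) * exp (-(b*u))) = (1/b) ^ (γ-1) * Real.Gamma (γ-1) := by
    rw [← Real.integral_rpow_mul_exp_neg_mul_Ioi hγ1 hb]
    apply setIntegral_congr_fun measurableSet_Ioi
    intro x _
    rw [show γ-1-1 = γ-2 by ring]
  have hpow : (1/b : ℝ) ^ (γ-1) = b ^ (1-γ) := by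
    rw [one_div, ← Real.rpow_neg_one b, ← Real.rpow_mul hb.le,
      show (-1)*(γ-1) = 1-γ by ring]
  calc (∫ u in Ioi (1:ℝ), u ^ (γ-2) * exp (-(b*u)))
      ≤ ∫ u in Ioi (0:ℝ), u ^ (γ-2) * exp (-(b*u)) := hmono
    _ = (1/b) ^ (γ-1) * Real.Gamma (γ-1) := hval
    _ = Real.Gamma (γ-1) * b ^ (1-γ) := by rw [hpow]; ring

lemma J_bound (γ : ℝ) (hγ : 1 ≤ γ) :
    ∃ C : ℝ, 0 < C ∧ ∀ b : ℝ, 0 < b →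
      (∫ t in Ioc (0:ℝ) 1, t ^ (-γ) * exp (-(b / t))) ≤
        C * (if γ = 1 then Real.log (Real.exp 1 + 1 / b) else 1) * b ^ (1 - γ) := by
  have hΓ : 0 ≤ Real.Gamma (γ - 1) := Real.Gamma_nonneg_of_nonneg (by linarith)
  refine ⟨2 + Real.Gamma (γ - 1), by linarith, fun b hb => ?_⟩
  rw [J_eq]
  rcases eq_or_lt_of_le hγ with hγ1 | hγ1
  · rw [if_pos hγ1.symm, ← hγ1,
      show (1:ℝ)-1 = 0 by norm_num, Real.Gamma_zero, Real.rpow_zero, add_zero, mul_one]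
    exact J1_bound hb
  · rw [if_neg (by linarith)]
    have h := J2_bound hγ1 hb
    have hbp : (0:ℝ) < b ^ (1-γ) := Real.rpow_pos_of_pos hb _
    nlinarith [h, hbp]

lemma gauss_piece {a : ℝ} (s : ℝ) (ha : 0 < a) :
    (∫ t in Ioc (0:ℝ) 1, exp (-a * (t - s)^2)) ≤ Real.sqrt (π / a) := by
  have hint : Integrable (fun t : ℝ => exp (-a * (t - s)^2)) :=
    (integrable_exp_neg_mul_sq ha).comp_sub_right s
  calc (∫ t in Ioc (0:ℝ) 1, exp (-a * (t - s)^2))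
      ≤ ∫ t : ℝ, exp (-a * (t - s)^2) :=
        setIntegral_le_integral hint (ae_of_all _ (fun t => (Real.exp_pos _).le))
    _ = ∫ t : ℝ, exp (-a * t^2) :=
        MeasureTheory.integral_sub_right_eq_self (fun t : ℝ => exp (-a * t^2)) s
    _ = Real.sqrt (π / a) := integral_gaussian a

lemma F2_eq {γ α s : ℝ} (hα : 0 < α) (hs : 0 < s) :
    s ^ (-γ) * Real.sqrt (π / (α / (4*s))) =
      2 ^ ((5:ℝ)/2 - γ) * Real.sqrt π * (α * s^2) ^ (1-γ) * (2*α*s) ^ (γ - 3/2) := by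
  have hπ : (0:ℝ) < π := Real.pi_pos
  have h1 : (0:ℝ) < α / (4*s) := by positivity
  have h4s : (0:ℝ) < 4*s := by positivity
  have hs2 : (0:ℝ) < α*s^2 := by positivity
  have h2as : (0:ℝ) < 2*α*s := by positivity
  have h2a : (0:ℝ) < 2*α := by positivity
  have hL : (0:ℝ) < s ^ (-γ) * Real.sqrt (π / (α/(4*s))) := by positivity
  have hp1 : (0:ℝ) < 2 ^ ((5:ℝ)/2-γ) := Real.rpow_pos_of_pos two_pos _
  have hp2 : (0:ℝ) < Real.sqrt π := Real.sqrt_pos.2 hπ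
  have hp3 : (0:ℝ) < (α*s^2) ^ (1-γ) := Real.rpow_pos_of_pos hs2 _
  have hp4 : (0:ℝ) < (2*α*s) ^ (γ-3/2) := Real.rpow_pos_of_pos h2as _
  have hR : (0:ℝ) < 2 ^ ((5:ℝ)/2-γ) * Real.sqrt π * (α*s^2) ^ (1-γ) * (2*α*s) ^ (γ-3/2) := by
    positivity
  rw [← Real.exp_log hL, ← Real.exp_log hR]
  congr 1
  have l1 : Real.log (s ^ (-γ)) = -γ * Real.log s := Real.log_rpow hs _
  have l2 : Real.log (Real.sqrt (π / (α/(4*s)))) =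
      (Real.log π - (Real.log α - (2 * Real.log 2 + Real.log s)))/2 := by
    rw [Real.log_sqrt (by positivity : (0:ℝ) ≤ π / (α/(4*s))),
      Real.log_div hπ.ne' h1.ne', Real.log_div hα.ne' h4s.ne',
      Real.log_mul (by norm_num : (4:ℝ) ≠ 0) hs.ne',
      show (4:ℝ) = 2^2 by norm_num, Real.log_pow]
    push_cast; ring
  have l3 : Real.log ((α*s^2) ^ (1-γ)) = (1-γ) * (Real.log α + 2 * Real.log s) := by
    rw [Real.log_rpow hs2, Real.log_mul hα.ne' (by positivity : (0:ℝ) < s^2).ne',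
      Real.log_pow]
    push_cast; ring
  have l4 : Real.log ((2*α*s) ^ (γ-3/2)) =
      (γ-3/2) * (Real.log 2 + Real.log α + Real.log s) := by
    rw [Real.log_rpow h2as, Real.log_mul h2a.ne' hs.ne',
      Real.log_mul (by norm_num : (2:ℝ) ≠ 0) hα.ne']
  rw [Real.log_mul (Real.rpow_pos_of_pos hs (-γ)).ne' (Real.sqrt_pos.2 (by positivity : (0:ℝ) < π/(α/(4*s)))).ne', l1, l2,
    Real.log_mul (mul_pos (mul_pos hp1 hp2) hp3).ne' hp4.ne',
    Real.log_mul (mul_pos hp1 hp2).ne' hp3.ne',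
    Real.log_mul hp1.ne' hp2.ne',
    Real.log_rpow two_pos, Real.log_sqrt hπ.le, l3, l4]
  ring

lemma pointwise_two {γ α s t : ℝ} (hγ : 1 ≤ γ) (hα : 0 < α) (hs : 0 < s)
    (ht : t ∈ Ioc (0:ℝ) 1) :
    t ^ (-γ) * exp (-α * t - (α*s^2) / t) ≤
      exp (-(2*α*s)) * (exp (-(α*s)) * (t ^ (-γ) * exp (-(α*s^2/4 / t)))
        + (4:ℝ)^γ * s ^ (-γ) * exp (-(α/(4*s)) * (t - s)^2)) := by
  have ht0 : (0:ℝ) < t := ht.1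
  have htpow : (0:ℝ) ≤ t ^ (-γ) := Real.rpow_nonneg ht0.le _
  have hid : -α * t - (α*s^2) / t = -(2*α*s) + -(α*(t-s)^2/t) := by
    field_simp; ring
  have hfac : t ^ (-γ) * exp (-α * t - (α*s^2) / t) =
      exp (-(2*α*s)) * (t ^ (-γ) * exp (-(α*(t-s)^2/t))) := by
    rw [hid, Real.exp_add]; ring
  rw [hfac, mul_le_mul_iff_right₀ (Real.exp_pos _)]
  by_cases hcase : s/4 < t ∧ t ≤ 4*s
  · have h1 : t ^ (-γ) ≤ (4:ℝ)^γ * s ^ (-γ) := by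
      have hst : t ^ (-γ) ≤ (s/4) ^ (-γ) :=
        Real.rpow_le_rpow_of_nonpos (by positivity : (0:ℝ) < s/4) hcase.1.le
          (by linarith : -γ ≤ 0)
      have heq : (s/4 : ℝ) ^ (-γ) = (4:ℝ)^γ * s ^ (-γ) := by
        rw [Real.div_rpow hs.le (by norm_num : (0:ℝ) ≤ 4),
          show ((4:ℝ)^(-γ)) = ((4:ℝ)^γ)⁻¹ from Real.rpow_neg (by norm_num) γ,
          div_eq_mul_inv, inv_inv]
        ring
      rw [heq] at hst; exact hst
    have h2 : exp (-(α*(t-s)^2/t)) ≤ exp (-(α/(4*s)) * (t-s)^2) := by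
      apply Real.exp_le_exp.2
      rw [neg_le, neg_mul, neg_neg, div_mul_eq_mul_div,
        div_le_div_iff₀ (by positivity : (0:ℝ) < 4*s) ht0]
      nlinarith [mul_nonneg (mul_nonneg hα.le (sq_nonneg (t-s))) (sub_nonneg.2 hcase.2)]
    calc t ^ (-γ) * exp (-(α*(t-s)^2/t))
        ≤ ((4:ℝ)^γ * s ^ (-γ)) * exp (-(α/(4*s)) * (t-s)^2) :=
          mul_le_mul h1 h2 (Real.exp_pos _).le (by positivity)
      _ ≤ _ := le_add_of_nonneg_left (by positivity)
  · have hout : t ≤ s/4 ∨ 4*s < t := by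
      rcases lt_or_ge (s/4) t with h | h
      · right; by_contra hc; push_neg at hc; exact hcase ⟨h, by linarith⟩
      · left; exact h
    have key : α*s*t + α*s^2/4 ≤ α*(t-s)^2 := by
      rcases hout with h | h
      · nlinarith [mul_nonneg (sub_nonneg.2 h) hs.le, sq_nonneg t, hα.le,
          mul_nonneg (mul_nonneg hα.le (sub_nonneg.2 h)) hs.le]
      · nlinarith [mul_pos ht0 (show (0:ℝ) < t - 3*s by linarith), hα.le,
          mul_nonneg (mul_nonneg hα.le ht0.le) (show (0:ℝ) ≤ t - 3*s by linarith)]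
    have hE : α*s + α*s^2/4 / t ≤ α*(t-s)^2/t := by
      rw [show α*s + α*s^2/4/t = (α*s*t + α*s^2/4)/t by field_simp]
      gcongr
    calc t ^ (-γ) * exp (-(α*(t-s)^2/t))
        ≤ t ^ (-γ) * (exp (-(α*s)) * exp (-(α*s^2/4 / t))) := by
          apply mul_le_mul_of_nonneg_left _ htpow
          rw [← Real.exp_add]
          apply Real.exp_le_exp.2
          linarith
      _ = exp (-(α*s)) * (t ^ (-γ) * exp (-(α*s^2/4 / t))) := by ring
      _ ≤ _ := le_add_of_nonneg_right (by positivity)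

set_option maxHeartbeats 2000000 in
/-- For every `γ ∈ [1,∞)` there is `c_γ > 0` such that for all `α, β > 0`,
`∫₀¹ t^{−γ} e^{−αt − β/t} dt ≤ c_γ · L_γ(β) · β^{−(γ−1)} · (1 + 2√(αβ))^{−(3/2−γ)} · e^{−2√(αβ)}`,
where `L_γ(β) = log(e + 1/β)` if `γ = 1` and `L_γ(β) = 1` if `γ > 1`. -/
theorem incomplete_bessel_integral_upper_bound
    (γ : ℝ) (hγ : 1 ≤ γ) :
    ∃ c : ℝ, 0 < c ∧ ∀ α β : ℝ, 0 < α → 0 < β →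
      (∫ t in Set.Ioc (0:ℝ) 1, t ^ (-γ) * Real.exp (-α * t - β / t)) ≤
        c * (if γ = 1 then Real.log (Real.exp 1 + 1 / β) else 1) *
          β ^ (-(γ - 1)) * (1 + 2 * Real.sqrt (α * β)) ^ (-(3 / 2 - γ)) *
          Real.exp (-2 * Real.sqrt (α * β)) := by
  obtain ⟨C, hC, hJ⟩ := J_bound γ hγ
  refine ⟨(6*C + 12) * 4 ^ γ, by positivity, fun α β hα hβ => ?_⟩
  have hfour : (1:ℝ) ≤ 4 ^ γ := by
    calc (1:ℝ) = 1 ^ γ := (Real.one_rpow γ).symm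
      _ ≤ 4 ^ γ := Real.rpow_le_rpow zero_le_one (by norm_num) (by linarith)
  rw [show -(γ-1) = 1-γ by ring, show -(3/2-γ) = γ - 3/2 by ring,
    show (-2 : ℝ) * Real.sqrt (α*β) = -(2 * Real.sqrt (α*β)) by ring]
  set L : ℝ := if γ = 1 then Real.log (Real.exp 1 + 1 / β) else 1 with hLdef
  have hL1 : 1 ≤ L := by
    rw [hLdef]
    split
    · have h1 : Real.exp 1 ≤ Real.exp 1 + 1/β := le_add_of_nonneg_right (by positivity)
      calc (1:ℝ) = Real.log (Real.exp 1) := (Real.log_exp 1).symm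
        _ ≤ _ := Real.log_le_log (Real.exp_pos 1) h1
    · exact le_refl 1
  have hL0 : (0:ℝ) < L := lt_of_lt_of_le one_pos hL1
  have hβp : (0:ℝ) < β ^ (1-γ) := Real.rpow_pos_of_pos hβ _
  have hq0 : (0:ℝ) ≤ 2 * Real.sqrt (α*β) := by positivity
  rcases le_or_gt (2 * Real.sqrt (α*β)) 1 with hm1 | hm1
  · -- CASE A : m ≤ 1
    have hmono : (∫ t in Ioc (0:ℝ) 1, t ^ (-γ) * exp (-α * t - β / t)) ≤
        ∫ t in Ioc (0:ℝ) 1, t ^ (-γ) * exp (-(β / t)) := by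
      apply integral_mono_of_nonneg
      · filter_upwards [ae_restrict_mem measurableSet_Ioc] with t ht
        exact mul_nonneg (Real.rpow_nonneg ht.1.le _) (Real.exp_pos _).le
      · exact J_integrableOn γ β hβ
      · filter_upwards [ae_restrict_mem measurableSet_Ioc] with t ht
        apply mul_le_mul_of_nonneg_left _ (Real.rpow_nonneg ht.1.le _)
        apply Real.exp_le_exp.2
        nlinarith [mul_pos hα ht.1]
    have hJβ := hJ β hβ
    rw [← hLdef] at hJβ
    have hE3 : (1:ℝ)/3 ≤ exp (-(2 * Real.sqrt (α*β))) := by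
      have h1 : exp (-(1:ℝ)) ≤ exp (-(2*Real.sqrt (α*β))) := Real.exp_le_exp.2 (by linarith)
      have h3 : Real.exp 1 ≤ 3 := le_of_lt (lt_trans Real.exp_one_lt_d9 (by norm_num))
      have h2 : (1:ℝ)/3 ≤ exp (-(1:ℝ)) := by
        rw [Real.exp_neg]
        nlinarith [mul_inv_cancel₀ (Real.exp_pos 1).ne', inv_pos.2 (Real.exp_pos 1)]
      linarith
    have hP2 : (1:ℝ)/2 ≤ (1 + 2*Real.sqrt (α*β)) ^ (γ - 3/2) := by
      rcases le_or_gt (3/2 : ℝ) γ with h32 | h32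
      · calc (1:ℝ)/2 ≤ 1 := by norm_num
          _ = (1:ℝ) ^ (γ-3/2) := (Real.one_rpow _).symm
          _ ≤ _ := Real.rpow_le_rpow zero_le_one (by linarith) (by linarith)
      · have ha : (2:ℝ) ^ (γ-3/2) ≤ (1 + 2*Real.sqrt (α*β)) ^ (γ-3/2) :=
          Real.rpow_le_rpow_of_nonpos (by linarith) (by linarith) (by linarith)
        have hb : (2:ℝ) ^ ((-1):ℝ) ≤ (2:ℝ) ^ (γ-3/2) :=
          Real.rpow_le_rpow_of_exponent_le one_le_two (by linarith)
        have hc : (2:ℝ) ^ ((-1):ℝ) = 1/2 := by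
          rw [Real.rpow_neg_one]; norm_num
        linarith
    have hKC : (0:ℝ) ≤ ((6*C+12) * 4^γ)*(1/2)*(1/3) - C := by nlinarith
    have step1 : C * L * β ^ (1-γ) ≤ ((6*C+12) * 4^γ) * L * β ^ (1-γ) * (1/2) * (1/3) := by
      nlinarith [mul_nonneg hKC (mul_pos hL0 hβp).le]
    have hXnn : (0:ℝ) ≤ ((6*C+12) * 4^γ) * L * β ^ (1-γ) :=
      mul_nonneg (mul_nonneg (by positivity) hL0.le) hβp.le
    calc (∫ t in Ioc (0:ℝ) 1, t ^ (-γ) * exp (-α * t - β / t))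
        ≤ C * L * β ^ (1-γ) := hmono.trans hJβ
      _ ≤ ((6*C+12) * 4^γ) * L * β ^ (1-γ) * (1/2) * (1/3) := step1
      _ ≤ ((6*C+12) * 4^γ) * L * β ^ (1-γ) * ((1 + 2*Real.sqrt (α*β)) ^ (γ-3/2)) * (1/3) := by
          apply mul_le_mul_of_nonneg_right _ (by norm_num : (0:ℝ) ≤ 1/3)
          exact mul_le_mul_of_nonneg_left hP2 hXnn
      _ ≤ ((6*C+12) * 4^γ) * L * β ^ (1-γ) * ((1 + 2*Real.sqrt (α*β)) ^ (γ-3/2))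
            * exp (-(2 * Real.sqrt (α*β))) := by
          apply mul_le_mul_of_nonneg_left hE3
          exact mul_nonneg hXnn (le_trans (by norm_num) hP2)
  · -- CASE B : m > 1
    set s : ℝ := Real.sqrt β / Real.sqrt α with hsdef
    have hs : 0 < s := by
      rw [hsdef]; positivity
    have hβs : β = α * s^2 := by
      rw [hsdef, div_pow, Real.sq_sqrt hβ.le, Real.sq_sqrt hα.le]
      field_simp
    have hms : Real.sqrt (α*β) = α * s := by
      rw [Real.sqrt_mul hα.le, hsdef]
      calc Real.sqrt α * Real.sqrt β = (α / Real.sqrt α) * Real.sqrt β := by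
            rw [Real.div_sqrt]
        _ = α * (Real.sqrt β / Real.sqrt α) := by ring
    have hms2 : 2 * Real.sqrt (α*β) = 2*α*s := by rw [hms]; ring
    rw [hms2]
    rw [hms2] at hm1
    have hq1 : (1:ℝ) ≤ 2*α*s := hm1.le
    have hFint : IntegrableOn
        (fun t : ℝ => exp (-(α*s)) * (t ^ (-γ) * exp (-(β/4 / t)))) (Ioc 0 1) :=
      (J_integrableOn γ (β/4) (by positivity)).const_mul _
    have hGint : IntegrableOn
        (fun t : ℝ => (4:ℝ)^γ * s ^ (-γ) * exp (-(α/(4*s)) * (t - s)^2)) (Ioc 0 1) :=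
      (((integrable_exp_neg_mul_sq (show (0:ℝ) < α/(4*s) by positivity)).comp_sub_right
        s).integrableOn).const_mul _
    have hmono : (∫ t in Ioc (0:ℝ) 1, t ^ (-γ) * exp (-α * t - β / t)) ≤
        ∫ t in Ioc (0:ℝ) 1, exp (-(2*α*s)) *
          ((exp (-(α*s)) * (t ^ (-γ) * exp (-(β/4 / t))))
            + (4:ℝ)^γ * s ^ (-γ) * exp (-(α/(4*s)) * (t - s)^2)) := by
      apply integral_mono_of_nonneg
      · filter_upwards [ae_restrict_mem measurableSet_Ioc] with t ht
        exact mul_nonneg (Real.rpow_nonneg ht.1.le _) (Real.exp_pos _).le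
      · exact (hFint.add hGint).const_mul _
      · filter_upwards [ae_restrict_mem measurableSet_Ioc] with t ht
        have hpt := pointwise_two hγ hα hs ht
        rw [← hβs] at hpt
        exact hpt
    have hval : (∫ t in Ioc (0:ℝ) 1, exp (-(2*α*s)) *
          ((exp (-(α*s)) * (t ^ (-γ) * exp (-(β/4 / t))))
            + (4:ℝ)^γ * s ^ (-γ) * exp (-(α/(4*s)) * (t - s)^2)))
        = exp (-(2*α*s)) *
          ((∫ t in Ioc (0:ℝ) 1, exp (-(α*s)) * (t ^ (-γ) * exp (-(β/4 / t))))
            + ∫ t in Ioc (0:ℝ) 1, (4:ℝ)^γ * s ^ (-γ) * exp (-(α/(4*s)) * (t - s)^2)) := by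
      rw [integral_const_mul, integral_add hFint hGint]
    -- bound on the first inner integral
    have hL41 : (1:ℝ) ≤ (if γ = 1 then Real.log (Real.exp 1 + 1 / (β/4)) else 1) := by
      split
      · have h1 : Real.exp 1 ≤ Real.exp 1 + 1/(β/4) := le_add_of_nonneg_right (by positivity)
        calc (1:ℝ) = Real.log (Real.exp 1) := (Real.log_exp 1).symm
          _ ≤ _ := Real.log_le_log (Real.exp_pos 1) h1
      · exact le_refl 1
    have hIA : (∫ t in Ioc (0:ℝ) 1, exp (-(α*s)) * (t ^ (-γ) * exp (-(β/4 / t))))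
        ≤ exp (-(α*s)) * (C * (if γ = 1 then Real.log (Real.exp 1 + 1 / (β/4)) else 1)
            * (β/4) ^ (1-γ)) := by
      rw [integral_const_mul]
      exact mul_le_mul_of_nonneg_left (hJ (β/4) (by positivity)) (Real.exp_pos _).le
    have hIB : (∫ t in Ioc (0:ℝ) 1, (4:ℝ)^γ * s ^ (-γ) * exp (-(α/(4*s)) * (t - s)^2))
        ≤ (4:ℝ)^γ * s ^ (-γ) * Real.sqrt (π / (α/(4*s))) := by
      rw [integral_const_mul]
      apply mul_le_mul_of_nonneg_left (gauss_piece s (by positivity))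
      exact mul_nonneg (by positivity) (Real.rpow_nonneg hs.le _)
    -- scalar bounds
    have b1 : exp (-(α*s)) ≤ (2*α*s) ^ (γ - 3/2) := by
      have h2as : (0:ℝ) < 2*α*s := by positivity
      have h1 : Real.sqrt (2*α*s) ≤ exp ((2*α*s)/2) := by
        rw [Real.exp_half]
        exact Real.sqrt_le_sqrt (by linarith [Real.add_one_le_exp (2*α*s)])
      have h2 : exp (-(α*s)) = (exp ((2*α*s)/2))⁻¹ := by
        rw [← Real.exp_neg]; congr 1; ring
      have h3 : (exp ((2*α*s)/2))⁻¹ ≤ (Real.sqrt (2*α*s))⁻¹ :=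
        inv_anti₀ (Real.sqrt_pos.2 h2as) h1
      have h4 : (Real.sqrt (2*α*s))⁻¹ = (2*α*s) ^ (-(1/2) : ℝ) := by
        rw [Real.sqrt_eq_rpow, ← Real.rpow_neg h2as.le]
      have h5 : (2*α*s) ^ (-(1/2):ℝ) ≤ (2*α*s) ^ (γ-3/2) :=
        Real.rpow_le_rpow_of_exponent_le hq1 (by linarith)
      calc exp (-(α*s)) = (exp ((2*α*s)/2))⁻¹ := h2
        _ ≤ (Real.sqrt (2*α*s))⁻¹ := h3
        _ = (2*α*s) ^ (-(1/2):ℝ) := h4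
        _ ≤ (2*α*s) ^ (γ-3/2) := h5
    have b2 : (if γ = 1 then Real.log (Real.exp 1 + 1 / (β/4)) else 1) ≤ 3 * L := by
      rw [hLdef]
      by_cases hγ1 : γ = 1
      · rw [if_pos hγ1, if_pos hγ1]
        have e1 : 1/(β/4) = (4:ℝ)/β := one_div_div β 4
        rw [e1]
        have hlogβ : (1:ℝ) ≤ Real.log (Real.exp 1 + 1/β) := by
          have h1 : Real.exp 1 ≤ Real.exp 1 + 1/β := le_add_of_nonneg_right (by positivity)
          calc (1:ℝ) = Real.log (Real.exp 1) := (Real.log_exp 1).symm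
            _ ≤ _ := Real.log_le_log (Real.exp_pos 1) h1
        have h41 : Real.exp 1 + 4/β ≤ 4*(Real.exp 1 + 1/β) := by
          have h4β : (4:ℝ)*(1/β) = 4/β := by ring
          nlinarith [Real.exp_pos 1]
        have h42 : Real.log (Real.exp 1 + 4/β) ≤ Real.log (4*(Real.exp 1 + 1/β)) :=
          Real.log_le_log (by positivity) h41
        have h43 : Real.log (4*(Real.exp 1 + 1/β)) =
            Real.log 4 + Real.log (Real.exp 1 + 1/β) :=
          Real.log_mul (by norm_num) (by positivity)
        have h44 : Real.log 4 ≤ 2 := by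
          rw [Real.log_le_iff_le_exp (by norm_num : (0:ℝ) < 4)]
          have h := Real.add_one_le_exp (1:ℝ)
          calc (4:ℝ) ≤ Real.exp 1 * Real.exp 1 := by nlinarith
            _ = Real.exp 2 := by rw [← Real.exp_add]; norm_num
        linarith
      · rw [if_neg hγ1, if_neg hγ1]; norm_num
    have b3 : (β/4 : ℝ) ^ (1-γ) ≤ 4^γ * β ^ (1-γ) := by
      have heq : (β/4 : ℝ) ^ (1-γ) = 4^(γ-1) * β ^ (1-γ) := by
        rw [Real.div_rpow hβ.le (by norm_num : (0:ℝ) ≤ 4),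
          show (1-γ) = -(γ-1) by ring,
          Real.rpow_neg (by norm_num : (0:ℝ) ≤ 4), div_eq_mul_inv, inv_inv]
        ring
      rw [heq]
      apply mul_le_mul_of_nonneg_right _ (Real.rpow_nonneg hβ.le _)
      exact Real.rpow_le_rpow_of_exponent_le (by norm_num) (by linarith)
    have hvalF2 : s ^ (-γ) * Real.sqrt (π / (α/(4*s))) =
        2 ^ ((5:ℝ)/2-γ) * Real.sqrt π * β ^ (1-γ) * (2*α*s) ^ (γ-3/2) := by
      rw [hβs]
      exact F2_eq hα hs
    have h52 : (2:ℝ) ^ ((5:ℝ)/2-γ) * Real.sqrt π ≤ 6 := by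
      have ha : (2:ℝ) ^ ((5:ℝ)/2-γ) ≤ (2:ℝ) ^ ((3:ℝ)/2) :=
        Real.rpow_le_rpow_of_exponent_le one_le_two (by linarith)
      have hb : (2:ℝ) ^ ((3:ℝ)/2) ≤ 3 := by
        rw [show (3:ℝ)/2 = (3:ℝ)*(1/2) by ring, Real.rpow_mul (by norm_num : (0:ℝ) ≤ 2),
          show ((2:ℝ)^(3:ℝ)) = 8 by
            rw [show (3:ℝ) = ((3:ℕ):ℝ) by norm_num, Real.rpow_natCast]; norm_num,
          ← Real.sqrt_eq_rpow]
        rw [show (3:ℝ) = Real.sqrt 9 by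
          rw [show (9:ℝ) = 3^2 by norm_num, Real.sqrt_sq (by norm_num : (0:ℝ) ≤ 3)]]
        exact Real.sqrt_le_sqrt (by norm_num)
      have hc : Real.sqrt π ≤ 2 := by
        rw [show (2:ℝ) = Real.sqrt 4 by
          rw [show (4:ℝ) = 2^2 by norm_num, Real.sqrt_sq (by norm_num : (0:ℝ) ≤ 2)]]
        exact Real.sqrt_le_sqrt Real.pi_le_four
      nlinarith [Real.sqrt_nonneg π, Real.rpow_pos_of_pos two_pos ((5:ℝ)/2-γ),
        (Real.rpow_le_rpow_of_exponent_le one_le_two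
          (by linarith : (5:ℝ)/2-γ ≤ (3:ℝ)/2) : (2:ℝ)^((5:ℝ)/2-γ) ≤ (2:ℝ)^((3:ℝ)/2))]
    have b5 : (2*α*s) ^ (γ-3/2) ≤ 2 * (1+2*α*s) ^ (γ-3/2) := by
      have hP0 : (0:ℝ) < (1+2*α*s) ^ (γ-3/2) := Real.rpow_pos_of_pos (by linarith) _
      rcases le_or_gt (3/2 : ℝ) γ with h32 | h32
      · have := Real.rpow_le_rpow (by positivity : (0:ℝ) ≤ 2*α*s)
          (by linarith : 2*α*s ≤ 1+2*α*s) (by linarith : (0:ℝ) ≤ γ-3/2)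
        linarith
      · have ha : (2*α*s) ^ (γ-3/2) ≤ ((1+2*α*s)/2) ^ (γ-3/2) := by
          apply Real.rpow_le_rpow_of_nonpos (by linarith) (by linarith) (by linarith)
        have hbq : ((1+2*α*s)/2 : ℝ) ^ (γ-3/2) =
            (1+2*α*s) ^ (γ-3/2) * ((2:ℝ) ^ (γ-3/2))⁻¹ := by
          rw [Real.div_rpow (by linarith : (0:ℝ) ≤ 1+2*α*s) (by norm_num : (0:ℝ) ≤ 2),
            div_eq_mul_inv]
        have hcq : ((2:ℝ) ^ ((-1):ℝ)) ≤ (2:ℝ) ^ (γ-3/2) :=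
          Real.rpow_le_rpow_of_exponent_le one_le_two (by linarith)
        have hdq : ((2:ℝ) ^ (γ-3/2))⁻¹ ≤ 2 := by
          rw [Real.rpow_neg_one] at hcq
          have h2p : (0:ℝ) < (2:ℝ) ^ (γ-3/2) := Real.rpow_pos_of_pos two_pos _
          rw [inv_le_comm₀ h2p (by norm_num : (0:ℝ) < 2)]
          linarith
        calc (2*α*s) ^ (γ-3/2) ≤ (1+2*α*s) ^ (γ-3/2) * ((2:ℝ) ^ (γ-3/2))⁻¹ := by
              rw [← hbq]; exact ha
          _ ≤ (1+2*α*s) ^ (γ-3/2) * 2 := mul_le_mul_of_nonneg_left hdq hP0.le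
          _ = 2 * (1+2*α*s) ^ (γ-3/2) := by ring
    -- assemble
    have hEp : (0:ℝ) < exp (-(2*α*s)) := Real.exp_pos _
    have hMe : (0:ℝ) ≤ (2*α*s) ^ (γ-3/2) := Real.rpow_nonneg (by positivity) _
    have hIA' : (∫ t in Ioc (0:ℝ) 1, exp (-(α*s)) * (t ^ (-γ) * exp (-(β/4 / t))))
        ≤ (2*α*s) ^ (γ-3/2) * (C * (3*L) * (4^γ * β ^ (1-γ))) := by
      apply le_trans hIA
      have hinner : C * (if γ = 1 then Real.log (Real.exp 1 + 1 / (β/4)) else 1)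
          * (β/4) ^ (1-γ) ≤ C * (3*L) * (4^γ * β ^ (1-γ)) := by
        apply mul_le_mul _ b3 (Real.rpow_nonneg (by positivity) _) _
        · exact mul_le_mul_of_nonneg_left b2 hC.le
        · exact mul_nonneg hC.le (by linarith)
      apply mul_le_mul b1 hinner _ hMe
      exact mul_nonneg (mul_nonneg hC.le (by linarith)) (Real.rpow_nonneg (by positivity) _)
    have hIB' : (∫ t in Ioc (0:ℝ) 1, (4:ℝ)^γ * s ^ (-γ) * exp (-(α/(4*s)) * (t - s)^2))
        ≤ 6 * 4^γ * (β ^ (1-γ) * (2*α*s) ^ (γ-3/2)) := by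
      apply le_trans hIB
      calc (4:ℝ)^γ * s ^ (-γ) * Real.sqrt (π / (α/(4*s)))
          = (4:ℝ)^γ * ((2:ℝ) ^ ((5:ℝ)/2-γ) * Real.sqrt π)
              * (β ^ (1-γ) * (2*α*s) ^ (γ-3/2)) := by
            rw [mul_assoc, hvalF2]; ring
        _ ≤ (4:ℝ)^γ * 6 * (β ^ (1-γ) * (2*α*s) ^ (γ-3/2)) := by
            apply mul_le_mul_of_nonneg_right _ (mul_nonneg hβp.le hMe)
            exact mul_le_mul_of_nonneg_left h52 (by positivity)
        _ = 6 * 4^γ * (β ^ (1-γ) * (2*α*s) ^ (γ-3/2)) := by ring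
    have hsum : (∫ t in Ioc (0:ℝ) 1, exp (-(α*s)) * (t ^ (-γ) * exp (-(β/4 / t))))
        + (∫ t in Ioc (0:ℝ) 1, (4:ℝ)^γ * s ^ (-γ) * exp (-(α/(4*s)) * (t - s)^2))
        ≤ (6*C+12) * 4^γ * L * β ^ (1-γ) * (1+2*α*s) ^ (γ-3/2) := by
      have h1 : (2*α*s) ^ (γ-3/2) * (C * (3*L) * (4^γ * β ^ (1-γ)))
          + 6 * 4^γ * (β ^ (1-γ) * (2*α*s) ^ (γ-3/2))
          ≤ (3*C+6) * 4^γ * L * β ^ (1-γ) * ((2*α*s) ^ (γ-3/2)) := by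
        have h6L : 6 * 4^γ * (β ^ (1-γ) * (2*α*s) ^ (γ-3/2))
            ≤ 6 * 4^γ * (β ^ (1-γ) * (2*α*s) ^ (γ-3/2)) * L := by
          nlinarith [mul_nonneg (mul_nonneg (by positivity : (0:ℝ) ≤ 6 * (4:ℝ)^γ)
            (mul_nonneg hβp.le hMe)) (by linarith : (0:ℝ) ≤ L - 1)]
        nlinarith [h6L]
      have h2 : (3*C+6) * 4^γ * L * β ^ (1-γ) * ((2*α*s) ^ (γ-3/2))
          ≤ (3*C+6) * 4^γ * L * β ^ (1-γ) * (2 * (1+2*α*s) ^ (γ-3/2)) := by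
        apply mul_le_mul_of_nonneg_left b5
        exact mul_nonneg (mul_nonneg (mul_nonneg
          (by nlinarith : (0:ℝ) ≤ 3*C+6) (by positivity : (0:ℝ) ≤ (4:ℝ)^γ)) hL0.le) hβp.le
      linarith [add_le_add hIA' hIB', h1, h2,
        show (3*C+6) * 4^γ * L * β ^ (1-γ) * (2 * (1+2*α*s) ^ (γ-3/2))
          = (6*C+12) * 4^γ * L * β ^ (1-γ) * (1+2*α*s) ^ (γ-3/2) by ring]
    calc (∫ t in Ioc (0:ℝ) 1, t ^ (-γ) * exp (-α * t - β / t))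
        ≤ exp (-(2*α*s)) *
          ((∫ t in Ioc (0:ℝ) 1, exp (-(α*s)) * (t ^ (-γ) * exp (-(β/4 / t))))
            + ∫ t in Ioc (0:ℝ) 1, (4:ℝ)^γ * s ^ (-γ) * exp (-(α/(4*s)) * (t - s)^2)) :=
          hval ▸ hmono
      _ ≤ exp (-(2*α*s)) * ((6*C+12) * 4^γ * L * β ^ (1-γ) * (1+2*α*s) ^ (γ-3/2)) :=
          mul_le_mul_of_nonneg_left hsum hEp.le
      _ = (6*C+12) * 4^γ * L * β ^ (1-γ) * (1+2*α*s) ^ (γ-3/2) * exp (-(2*α*s)) := by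
          ring
end

section
/- For every γ ∈ [1,∞) there exists a constant C_γ > 0 such that for all α, β > 0 with αβ ≥ 1: ∫₀^∞ t^{−γ} e^{−αt − β/t} dt ≤ C_γ · (α/β)^{(γ−1)/2} · (αβ)^{−1/4} · e^{−2√(αβ)}. -/
open MeasureTheory Set Real Nat

private lemma pow_div_fact_le_exp {y : ℝ} (hy : 0 ≤ y) (n : ℕ) :
    y ^ n / (n ! : ℝ) ≤ Real.exp y := by
  calc y ^ n / (n ! : ℝ) ≤ ∑ i ∈ Finset.range (n+1), y ^ i / i ! :=
        Finset.single_le_sum (f := fun i => y ^ i / (i ! : ℝ))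
          (fun i _ => by positivity) (Finset.self_mem_range_succ n)
    _ ≤ Real.exp y := Real.sum_le_exp_of_nonneg hy _

private lemma rpow_mul_exp_le (γ : ℝ) (hγ : 0 ≤ γ) :
    ∃ K : ℝ, 1 ≤ K ∧ ∀ x : ℝ, 1 ≤ x → x ^ γ * Real.exp (-(x/8)) ≤ K := by
  set n := ⌈γ⌉₊ with hn
  refine ⟨8 ^ n * (n ! : ℝ) + 1, le_add_of_nonneg_left (by positivity), fun x hx => ?_⟩
  have hx0 : (0:ℝ) < x := lt_of_lt_of_le one_pos hx
  have h1 : x ^ γ ≤ x ^ (n : ℝ) :=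
    Real.rpow_le_rpow_of_exponent_le hx (Nat.le_ceil γ)
  have h2 : x ^ (n : ℝ) = x ^ n := Real.rpow_natCast x n
  have h3 : x ^ n ≤ 8 ^ n * n ! * Real.exp (x/8) := by
    have h := pow_div_fact_le_exp (y := x/8) (by positivity) n
    rw [div_pow] at h
    have h8 : (0:ℝ) < 8 ^ n := by positivity
    have hf : (0:ℝ) < (n ! : ℝ) := by positivity
    rw [div_div, div_le_iff₀ (by positivity)] at h
    calc x ^ n ≤ Real.exp (x/8) * (8 ^ n * n !) := h
      _ = 8 ^ n * n ! * Real.exp (x/8) := by ring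
  have h5 : Real.exp (x/8) * Real.exp (-(x/8)) = 1 := by
    rw [← Real.exp_add]; simp
  have hexp : (0:ℝ) ≤ Real.exp (-(x/8)) := (Real.exp_pos _).le
  calc x ^ γ * Real.exp (-(x/8)) ≤ x ^ n * Real.exp (-(x/8)) := by
        apply mul_le_mul_of_nonneg_right (h1.trans_eq h2) hexp
    _ ≤ (8 ^ n * n ! * Real.exp (x/8)) * Real.exp (-(x/8)) :=
        mul_le_mul_of_nonneg_right h3 hexp
    _ = 8 ^ n * n ! * (Real.exp (x/8) * Real.exp (-(x/8))) := by ring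
    _ = 8 ^ n * n ! := by rw [h5, mul_one]
    _ ≤ 8 ^ n * n ! + 1 := by linarith

set_option maxHeartbeats 1000000 in
private lemma bessel_key (γ : ℝ) (hγ : 1 ≤ γ) :
    ∃ C : ℝ, 0 < C ∧ ∀ z : ℝ, 1 ≤ z →
      (∫ s in Set.Ioi (0:ℝ), s ^ (-γ) * Real.exp (-(z*s) - z/s)) ≤
        C * z ^ (-(1:ℝ)/2) * Real.exp (-2*z) := by
  have hγ0 : (0:ℝ) ≤ γ := le_trans zero_le_one hγ
  obtain ⟨K, hK1, hK⟩ := rpow_mul_exp_le γ hγ0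
  set A : ℝ := 2*K with hA
  have hA1 : (1:ℝ) ≤ A := by linarith
  refine ⟨128*A + 2^γ * Real.sqrt (2*Real.pi) * 2, by positivity, fun z hz => ?_⟩
  have hz0 : (0:ℝ) < z := lt_of_lt_of_le one_pos hz
  set g : ℝ → ℝ := fun s => Real.exp (-2*z) * (A * Real.exp (-(z/8)) * Real.exp (-(1/16)*s)
      + 2^γ * Real.exp (-(z/2) * (s-1)^2)) with hgdef
  have hint1 : IntegrableOn (fun s : ℝ => A * Real.exp (-(z/8)) * Real.exp (-(1/16)*s))
      (Set.Ioi (0:ℝ)) :=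
    (exp_neg_integrableOn_Ioi 0 (by norm_num : (0:ℝ) < 1/16)).const_mul _
  have hgauss : Integrable (fun s : ℝ => Real.exp (-(z/2) * (s-1)^2)) := by
    have h := (integrable_exp_neg_mul_sq (by positivity : (0:ℝ) < z/2)).comp_sub_right 1
    exact h
  have hint2 : IntegrableOn (fun s : ℝ => 2^γ * Real.exp (-(z/2) * (s-1)^2))
      (Set.Ioi (0:ℝ)) := (hgauss.integrableOn).const_mul _
  have hg_int : IntegrableOn g (Set.Ioi (0:ℝ)) := ((hint1.add hint2).const_mul _)
  -- pointwise bound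
  have hpt : ∀ s ∈ Set.Ioi (0:ℝ), s ^ (-γ) * Real.exp (-(z*s) - z/s) ≤ g s := by
    intro s hs
    rw [Set.mem_Ioi] at hs
    have hsne : s ≠ 0 := ne_of_gt hs
    have hsplit : Real.exp (-(z*s) - z/s)
        = Real.exp (-2*z) * Real.exp (-(z*((s-1)^2/s))) := by
      rw [← Real.exp_add]
      congr 1
      field_simp
      ring
    rw [hsplit, ← mul_assoc, mul_comm (s ^ (-γ)) (Real.exp (-2*z)), mul_assoc, hgdef]
    apply mul_le_mul_of_nonneg_left _ (Real.exp_nonneg _)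
    have hE0 : (0:ℝ) ≤ Real.exp (-(z*((s-1)^2/s))) := Real.exp_nonneg _
    rcases le_or_gt s (1/2) with hs2 | hs2
    · -- small s
      have hinv : (2:ℝ) ≤ 1/s := by
        rw [le_div_iff₀ hs]; linarith
      have hee : z * ((s-1)^2/s) ≥ z/8 + (1/8)*(1/s) := by
        rw [ge_iff_le, show z * ((s-1)^2/s) = z * (s-1)^2 / s from by ring,
          le_div_iff₀ hs]
        have h14 : (1:ℝ)/4 ≤ (s-1)^2 := by nlinarith
        have hsinv : (1/s) * s = 1 := by field_simp
        nlinarith [mul_le_mul_of_nonneg_left h14 hz0.le,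
          mul_le_mul_of_nonneg_left hs2 hz0.le]
      have h1 : s ^ (-γ) * Real.exp (-(z*((s-1)^2/s)))
          ≤ s ^ (-γ) * (Real.exp (-(z/8)) * Real.exp (-((1/8)*(1/s)))) := by
        apply mul_le_mul_of_nonneg_left _ (Real.rpow_nonneg hs.le _)
        rw [← Real.exp_add, Real.exp_le_exp]
        linarith
      have h2 : s ^ (-γ) * Real.exp (-((1/8)*(1/s))) ≤ K := by
        have : s ^ (-γ) = (1/s) ^ γ := by
          rw [one_div, Real.rpow_neg hs.le, ← Real.inv_rpow hs.le]
        rw [this]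
        have := hK (1/s) (by linarith)
        calc (1/s) ^ γ * Real.exp (-((1/8)*(1/s)))
            = (1/s) ^ γ * Real.exp (-((1/s)/8)) := by ring_nf
          _ ≤ K := this
      have h3 : Real.exp (-(1/16)*s) ≥ 1/2 := by
        have := Real.add_one_le_exp (-(1/16)*s)
        nlinarith
      have hfin : s ^ (-γ) * Real.exp (-(z*((s-1)^2/s)))
          ≤ A * Real.exp (-(z/8)) * Real.exp (-(1/16)*s) := by
        have hep : (0:ℝ) < Real.exp (-(z/8)) := Real.exp_pos _
        calc s ^ (-γ) * Real.exp (-(z*((s-1)^2/s)))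
            ≤ s ^ (-γ) * (Real.exp (-(z/8)) * Real.exp (-((1/8)*(1/s)))) := h1
          _ = (s ^ (-γ) * Real.exp (-((1/8)*(1/s)))) * Real.exp (-(z/8)) := by ring
          _ ≤ K * Real.exp (-(z/8)) := mul_le_mul_of_nonneg_right h2 hep.le
          _ ≤ A * Real.exp (-(z/8)) * Real.exp (-(1/16)*s) := by
              rw [hA]
              nlinarith [mul_le_mul_of_nonneg_left h3
                (by positivity : (0:ℝ) ≤ 2*K*Real.exp (-(z/8)))]
      have hpos2 : (0:ℝ) ≤ 2^γ * Real.exp (-(z/2) * (s-1)^2) := by positivity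
      linarith
    · rcases le_or_gt s 2 with hs3 | hs3
      · -- middle
        have h1 : s ^ (-γ) ≤ 2^γ := by
          have : s ^ (-γ) = (s⁻¹) ^ γ := by
            rw [Real.rpow_neg hs.le, ← Real.inv_rpow hs.le]
          rw [this]
          apply Real.rpow_le_rpow (by positivity) _ hγ0
          rw [inv_le_comm₀ (by positivity) (by norm_num)]
          linarith
        have h2 : Real.exp (-(z*((s-1)^2/s))) ≤ Real.exp (-(z/2)*(s-1)^2) := by
          apply Real.exp_le_exp.mpr
          have hkey : (z/2)*(s-1)^2 ≤ z*(s-1)^2/s := by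
            rw [le_div_iff₀ hs]
            nlinarith [mul_nonneg (mul_nonneg hz0.le (sq_nonneg (s-1)))
              (by linarith : (0:ℝ) ≤ 2 - s)]
          rw [show z*((s-1)^2/s) = z*(s-1)^2/s from by ring]
          linarith [hkey]
        have hfin : s ^ (-γ) * Real.exp (-(z*((s-1)^2/s)))
            ≤ 2^γ * Real.exp (-(z/2)*(s-1)^2) := by
          apply mul_le_mul h1 h2 hE0 (by positivity)
        have hpos1 : (0:ℝ) ≤ A * Real.exp (-(z/8)) * Real.exp (-(1/16)*s) := by positivity
        linarith
      · -- large s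
        have h1 : s ^ (-γ) ≤ 1 :=
          Real.rpow_le_one_of_one_le_of_nonpos (by linarith) (by linarith)
        have hee : z * ((s-1)^2/s) ≥ z/8 + (1/16)*s := by
          rw [ge_iff_le, show z * ((s-1)^2/s) = z * (s-1)^2 / s from by ring,
            le_div_iff₀ hs]
          nlinarith [mul_nonneg (mul_nonneg hz0.le (by linarith : (0:ℝ) ≤ 3*s-2))
              (by linarith : (0:ℝ) ≤ s-2),
            mul_nonneg (mul_nonneg hz0.le hs.le) (by linarith : (0:ℝ) ≤ s-1),
            mul_nonneg (by linarith : (0:ℝ) ≤ z-1) (sq_nonneg s)]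
        have hfin : s ^ (-γ) * Real.exp (-(z*((s-1)^2/s)))
            ≤ A * Real.exp (-(z/8)) * Real.exp (-(1/16)*s) := by
          calc s ^ (-γ) * Real.exp (-(z*((s-1)^2/s)))
              ≤ 1 * Real.exp (-(z*((s-1)^2/s))) := mul_le_mul_of_nonneg_right h1 hE0
            _ = Real.exp (-(z*((s-1)^2/s))) := one_mul _
            _ ≤ Real.exp (-(z/8)) * Real.exp (-(1/16)*s) := by
                rw [← Real.exp_add, Real.exp_le_exp]; linarith
            _ ≤ A * Real.exp (-(z/8)) * Real.exp (-(1/16)*s) := by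
                nlinarith [Real.exp_pos (-(z/8)), Real.exp_pos (-(1/16)*s),
                  mul_pos (Real.exp_pos (-(z/8))) (Real.exp_pos (-(1/16)*s))]
        have hpos2 : (0:ℝ) ≤ 2^γ * Real.exp (-(z/2) * (s-1)^2) := by positivity
        linarith
  -- integral of majorant
  have hmono : (∫ s in Set.Ioi (0:ℝ), s ^ (-γ) * Real.exp (-(z*s) - z/s))
      ≤ ∫ s in Set.Ioi (0:ℝ), g s := by
    apply integral_mono_of_nonneg _ hg_int
    · exact (ae_restrict_iff' measurableSet_Ioi).mpr (ae_of_all _ hpt)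
    · refine (ae_restrict_iff' measurableSet_Ioi).mpr (ae_of_all _ fun s hs => ?_)
      rw [Set.mem_Ioi] at hs
      positivity
  have hI1 : (∫ s in Set.Ioi (0:ℝ), Real.exp (-(1/16)*s)) = 16 := by
    have h := integral_comp_mul_left_Ioi (fun x => Real.exp (-x)) 0
      (by norm_num : (0:ℝ) < 1/16)
    simp only [mul_zero] at h
    have h2 : (∫ x in Set.Ioi (0:ℝ), Real.exp (-x)) = 1 := integral_exp_neg_Ioi_zero
    rw [h2, smul_eq_mul, mul_one] at h
    calc (∫ s in Set.Ioi (0:ℝ), Real.exp (-(1/16)*s))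
        = ∫ s in Set.Ioi (0:ℝ), Real.exp (-((1/16)*s)) := by
          congr 1; ext s; ring_nf
      _ = ((1:ℝ)/16)⁻¹ := h
      _ = 16 := by norm_num
  have hI2 : (∫ s in Set.Ioi (0:ℝ), Real.exp (-(z/2) * (s-1)^2))
      ≤ Real.sqrt (2*Real.pi) * z ^ (-(1:ℝ)/2) := by
    have hle : (∫ s in Set.Ioi (0:ℝ), Real.exp (-(z/2) * (s-1)^2))
        ≤ ∫ s : ℝ, Real.exp (-(z/2) * (s-1)^2) :=
      setIntegral_le_integral hgauss (ae_of_all _ fun s => Real.exp_nonneg _)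
    have heq : (∫ s : ℝ, Real.exp (-(z/2) * (s-1)^2))
        = ∫ s : ℝ, Real.exp (-(z/2) * s^2) :=
      integral_sub_right_eq_self (fun s => Real.exp (-(z/2) * s^2)) 1
    have hg2 : (∫ s : ℝ, Real.exp (-(z/2) * s^2)) = Real.sqrt (Real.pi / (z/2)) :=
      integral_gaussian (z/2)
    have hval : Real.sqrt (Real.pi / (z/2)) = Real.sqrt (2*Real.pi) * z ^ (-(1:ℝ)/2) := by
      have h1 : Real.pi / (z/2) = (2*Real.pi) / z := by field_simp
      rw [h1, Real.sqrt_div (by positivity) z, Real.sqrt_eq_rpow z,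
        div_eq_mul_inv, ← Real.rpow_neg hz0.le]
      norm_num
    rw [heq, hg2, hval] at hle
    exact hle
  have hexpz : Real.exp (-(z/8)) ≤ 8 * z ^ (-(1:ℝ)/2) := by
    have h1 : z/8 ≤ Real.exp (z/8) := by
      have := Real.add_one_le_exp (z/8); linarith
    have h2 : Real.exp (-(z/8)) ≤ 8/z := by
      rw [Real.exp_neg]
      calc (Real.exp (z/8))⁻¹ ≤ (z/8)⁻¹ := by
            apply inv_anti₀ (by positivity) h1
        _ = 8/z := by rw [inv_div]
    have h3 : z⁻¹ ≤ z ^ (-(1:ℝ)/2) := by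
      rw [← Real.rpow_neg_one z]
      exact Real.rpow_le_rpow_of_exponent_le hz (by norm_num)
    calc Real.exp (-(z/8)) ≤ 8/z := h2
      _ = 8 * z⁻¹ := by rw [div_eq_mul_inv]
      _ ≤ 8 * z ^ (-(1:ℝ)/2) := by linarith
  have hgval : (∫ s in Set.Ioi (0:ℝ), g s)
      ≤ (128*A + 2^γ * Real.sqrt (2*Real.pi) * 2) * z ^ (-(1:ℝ)/2) * Real.exp (-2*z) := by
    have hsplit : (∫ s in Set.Ioi (0:ℝ), g s)
        = Real.exp (-2*z) * ((A * Real.exp (-(z/8))) * (∫ s in Set.Ioi (0:ℝ), Real.exp (-(1/16)*s))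
          + 2^γ * (∫ s in Set.Ioi (0:ℝ), Real.exp (-(z/2) * (s-1)^2))) := by
      rw [hgdef]
      rw [integral_const_mul, integral_add hint1 hint2]
      congr 1
      rw [integral_const_mul, integral_const_mul, mul_assoc]
    rw [hsplit, hI1]
    have hz12 : (0:ℝ) < z ^ (-(1:ℝ)/2) := Real.rpow_pos_of_pos hz0 _
    have h2γ : (0:ℝ) < (2:ℝ)^γ := Real.rpow_pos_of_pos (by norm_num) _
    have hstep : (A * Real.exp (-(z/8))) * 16
          + 2^γ * (∫ s in Set.Ioi (0:ℝ), Real.exp (-(z/2) * (s-1)^2))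
        ≤ (128*A + 2^γ * Real.sqrt (2*Real.pi) * 2) * z ^ (-(1:ℝ)/2) := by
      have hA0 : (0:ℝ) < A := by linarith
      have t1 : (A * Real.exp (-(z/8))) * 16 ≤ 128 * A * z ^ (-(1:ℝ)/2) := by
        nlinarith [mul_le_mul_of_nonneg_left hexpz hA0.le]
      have t2 : 2^γ * (∫ s in Set.Ioi (0:ℝ), Real.exp (-(z/2) * (s-1)^2))
          ≤ 2^γ * (Real.sqrt (2*Real.pi) * z ^ (-(1:ℝ)/2)) :=
        mul_le_mul_of_nonneg_left hI2 h2γ.le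
      nlinarith [Real.sqrt_nonneg (2*Real.pi),
        mul_nonneg (mul_nonneg h2γ.le (Real.sqrt_nonneg (2*Real.pi))) hz12.le]
    calc Real.exp (-2*z) * ((A * Real.exp (-(z/8))) * 16
          + 2^γ * (∫ s in Set.Ioi (0:ℝ), Real.exp (-(z/2) * (s-1)^2)))
        ≤ Real.exp (-2*z) * ((128*A + 2^γ * Real.sqrt (2*Real.pi) * 2) * z ^ (-(1:ℝ)/2)) :=
          mul_le_mul_of_nonneg_left hstep (Real.exp_nonneg _)
      _ = (128*A + 2^γ * Real.sqrt (2*Real.pi) * 2) * z ^ (-(1:ℝ)/2) * Real.exp (-2*z) := by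
          ring
  exact hmono.trans hgval

/-- For every `γ ∈ [1,∞)` there is `C_γ > 0` such that for all `α, β > 0`
with `αβ ≥ 1`,
`∫₀^∞ t^{−γ} e^{−αt − β/t} dt ≤ C_γ · (α/β)^{(γ−1)/2} · (αβ)^{−1/4} · e^{−2√(αβ)}`. -/
theorem bessel_integral_upper_bound
    (γ : ℝ) (hγ : 1 ≤ γ) :
    ∃ C : ℝ, 0 < C ∧ ∀ α β : ℝ, 0 < α → 0 < β → 1 ≤ α * β →
      (∫ t in Set.Ioi (0:ℝ), t ^ (-γ) * Real.exp (-α * t - β / t)) ≤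
        C * (α / β) ^ ((γ - 1) / 2) * (α * β) ^ (-(1:ℝ)/4) *
          Real.exp (-2 * Real.sqrt (α * β)) := by
  obtain ⟨C, hC, hkey⟩ := bessel_key γ hγ
  refine ⟨C, hC, fun α β hα hβ hαβ => ?_⟩
  have hαβ0 : (0:ℝ) < α * β := mul_pos hα hβ
  have hba : (0:ℝ) < β / α := div_pos hβ hα
  set c : ℝ := Real.sqrt (β / α) with hcdef
  set z : ℝ := Real.sqrt (α * β) with hzdef
  have hc : 0 < c := Real.sqrt_pos.mpr hba
  have hz0 : 0 < z := Real.sqrt_pos.mpr hαβ0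
  have hz1 : 1 ≤ z := by
    rw [hzdef, show (1:ℝ) = Real.sqrt 1 from (Real.sqrt_one).symm]
    exact Real.sqrt_le_sqrt hαβ
  have hc2 : c ^ 2 = β / α := Real.sq_sqrt hba.le
  have hβ' : β = α * c ^ 2 := by rw [hc2]; field_simp
  have hαc : α * c = z := by
    rw [hzdef, show α * β = (α * c)^2 from by rw [hβ']; ring,
      Real.sqrt_sq (by positivity)]
  -- change of variables
  have hcv := integral_comp_mul_left_Ioi
    (fun t => t ^ (-γ) * Real.exp (-α * t - β / t)) 0 hc
  simp only [mul_zero, smul_eq_mul] at hcv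
  -- hcv : ∫ s in Ioi 0, (c*s)^(-γ) * exp (-α*(c*s) - β/(c*s)) = c⁻¹ * I
  have hIeq : (∫ t in Set.Ioi (0:ℝ), t ^ (-γ) * Real.exp (-α * t - β / t))
      = c * ∫ s in Set.Ioi (0:ℝ), (c*s) ^ (-γ) * Real.exp (-α * (c*s) - β / (c*s)) := by
    rw [hcv, ← mul_assoc, mul_inv_cancel₀ (ne_of_gt hc), one_mul]
  have hcongr : (∫ s in Set.Ioi (0:ℝ), (c*s) ^ (-γ) * Real.exp (-α * (c*s) - β / (c*s)))
      = ∫ s in Set.Ioi (0:ℝ), c ^ (-γ) * (s ^ (-γ) * Real.exp (-(z*s) - z/s)) := by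
    apply setIntegral_congr_fun measurableSet_Ioi
    intro s hs
    rw [Set.mem_Ioi] at hs
    have hsne : s ≠ 0 := ne_of_gt hs
    have hcne : c ≠ 0 := ne_of_gt hc
    have h1 : (c*s) ^ (-γ) = c ^ (-γ) * s ^ (-γ) := Real.mul_rpow hc.le hs.le
    have h2 : -α * (c*s) - β / (c*s) = -(z*s) - z/s := by
      rw [← hαc, hβ']
      field_simp
    show (c*s) ^ (-γ) * Real.exp (-α * (c*s) - β / (c*s))
        = c ^ (-γ) * (s ^ (-γ) * Real.exp (-(z*s) - z/s))
    rw [h1, h2, mul_assoc]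
  have hJ := hkey z hz1
  -- prefactor computation
  have hpre : c * c ^ (-γ) = (α / β) ^ ((γ - 1) / 2) := by
    have e1 : c * c ^ (-γ) = c ^ ((1:ℝ) + -γ) := by
      rw [Real.rpow_add hc, Real.rpow_one]
    have e2 : c = (β/α) ^ ((1:ℝ)/2) := by rw [hcdef, Real.sqrt_eq_rpow]
    have e3 : c ^ ((1:ℝ) + -γ) = (β/α) ^ (((1:ℝ)/2) * ((1:ℝ) + -γ)) := by
      rw [e2, ← Real.rpow_mul hba.le]
    have e4 : (β/α) = (α/β)⁻¹ := by rw [inv_div]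
    have e5 : (β/α) ^ (((1:ℝ)/2) * ((1:ℝ) + -γ)) = (α/β) ^ (-(((1:ℝ)/2) * ((1:ℝ) + -γ))) := by
      rw [e4, Real.inv_rpow (by positivity), ← Real.rpow_neg (by positivity)]
    rw [e1, e3, e5]
    congr 1
    ring
  have hzpow : z ^ (-(1:ℝ)/2) = (α * β) ^ (-(1:ℝ)/4) := by
    have e1 : z = (α*β) ^ ((1:ℝ)/2) := by rw [hzdef, Real.sqrt_eq_rpow]
    rw [e1, ← Real.rpow_mul hαβ0.le]
    norm_num
  have hpre0 : (0:ℝ) ≤ c * c ^ (-γ) := by positivity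
  calc (∫ t in Set.Ioi (0:ℝ), t ^ (-γ) * Real.exp (-α * t - β / t))
      = (c * c ^ (-γ)) * ∫ s in Set.Ioi (0:ℝ), s ^ (-γ) * Real.exp (-(z*s) - z/s) := by
        rw [hIeq, hcongr, MeasureTheory.integral_const_mul, mul_assoc]
    _ ≤ (c * c ^ (-γ)) * (C * z ^ (-(1:ℝ)/2) * Real.exp (-2*z)) :=
        mul_le_mul_of_nonneg_left hJ hpre0
    _ = C * (α / β) ^ ((γ - 1) / 2) * (α * β) ^ (-(1:ℝ)/4) * Real.exp (-2 * z) := by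
        rw [← hpre, ← hzpow]; ring
end

section
/- For every γ ∈ [1,∞) there exists a constant c_γ > 0 such that for all α, β > 0 with αβ ≥ 1: ∫₀^∞ t^{−γ} e^{−αt − β/t} dt ≥ c_γ · (α/β)^{(γ−1)/2} · (αβ)^{−1/4} · e^{−2√(αβ)}. -/
open MeasureTheory Set Real

lemma rpow_le_pow_mul_exp (γ : ℝ) (hγ : 1 ≤ γ) {x : ℝ} (hx : 0 ≤ x) :
    x ^ γ ≤ γ ^ γ * Real.exp x := by
  have hγ0 : 0 < γ := lt_of_lt_of_le one_pos hγ
  have h1 : x ≤ γ * Real.exp (x / γ) := by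
    have h2 := Real.add_one_le_exp (x / γ)
    have h3 : (x / γ) * γ = x := div_mul_cancel₀ x hγ0.ne'
    nlinarith [Real.exp_pos (x / γ)]
  calc x ^ γ ≤ (γ * Real.exp (x / γ)) ^ γ := Real.rpow_le_rpow hx h1 hγ0.le
    _ = γ ^ γ * (Real.exp (x / γ)) ^ γ := Real.mul_rpow hγ0.le (Real.exp_pos _).le
    _ = γ ^ γ * Real.exp x := by
        rw [← Real.exp_mul, div_mul_cancel₀ _ hγ0.ne']

lemma integrable_bessel (γ α β : ℝ) (hγ : 1 ≤ γ) (hα : 0 < α) (hβ : 0 < β) :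
    IntegrableOn (fun t : ℝ => t ^ (-γ) * Real.exp (-α * t - β / t)) (Set.Ioi 0) := by
  have hγ0 : 0 < γ := lt_of_lt_of_le one_pos hγ
  have hcont : ContinuousOn (fun t : ℝ => t ^ (-γ) * Real.exp (-α * t - β / t)) (Set.Ioi 0) := by
    apply ContinuousOn.mul
    · exact continuousOn_id.rpow_const fun x hx => Or.inl (ne_of_gt hx)
    · apply Real.continuous_exp.comp_continuousOn
      exact ((continuousOn_const.mul continuousOn_id).sub
        (continuousOn_const.div continuousOn_id fun x hx => ne_of_gt hx))
  have hnonneg : ∀ t ∈ Set.Ioi (0:ℝ), 0 ≤ t ^ (-γ) * Real.exp (-α * t - β / t) := by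
    intro t ht
    exact mul_nonneg (Real.rpow_nonneg (le_of_lt ht) _) (Real.exp_pos _).le
  have hbound : ∀ t ∈ Set.Ioi (0:ℝ),
      t ^ (-γ) * Real.exp (-β / t) ≤ γ ^ γ / β ^ γ := by
    intro t ht
    have ht0 : (0:ℝ) < t := ht
    have hx : (0:ℝ) ≤ β / t := (div_pos hβ ht0).le
    have key := rpow_le_pow_mul_exp γ hγ hx
    have hβt : (β / t) ^ γ = β ^ γ * t ^ (-γ) := by
      rw [Real.div_rpow hβ.le ht0.le, Real.rpow_neg ht0.le, div_eq_mul_inv]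
    rw [hβt] at key
    have hβγ : (0:ℝ) < β ^ γ := Real.rpow_pos_of_pos hβ _
    rw [le_div_iff₀ hβγ]
    calc t ^ (-γ) * Real.exp (-β / t) * β ^ γ
        = β ^ γ * t ^ (-γ) * Real.exp (-β / t) := by ring
      _ ≤ γ ^ γ * Real.exp (β / t) * Real.exp (-β / t) :=
          mul_le_mul_of_nonneg_right key (Real.exp_pos _).le
      _ = γ ^ γ := by
          rw [mul_assoc, ← Real.exp_add, neg_div, add_neg_cancel, Real.exp_zero, mul_one]
  rw [show Set.Ioi (0:ℝ) = Set.Ioc 0 1 ∪ Set.Ioi 1 by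
    rw [Set.Ioc_union_Ioi_eq_Ioi]; norm_num]
  apply MeasureTheory.IntegrableOn.union
  · -- on Ioc 0 1 : bounded by constant
    have hmeas : AEStronglyMeasurable (fun t : ℝ => t ^ (-γ) * Real.exp (-α * t - β / t))
        (volume.restrict (Set.Ioc 0 1)) :=
      (hcont.mono (fun x hx => hx.1)).aestronglyMeasurable measurableSet_Ioc
    apply MeasureTheory.Integrable.mono' (g := fun _ : ℝ => γ ^ γ / β ^ γ)
      (integrableOn_const measure_Ioc_lt_top.ne) hmeas
    filter_upwards [ae_restrict_mem measurableSet_Ioc] with t ht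
    have ht0 : (0:ℝ) < t := ht.1
    rw [Real.norm_of_nonneg (hnonneg t ht0)]
    have : Real.exp (-α * t - β / t) ≤ Real.exp (-β / t) := by
      apply Real.exp_le_exp.2
      have h0 : 0 ≤ α * t := mul_nonneg hα.le ht0.le
      have hnd : -β / t = -(β / t) := neg_div t β
      linarith
    calc t ^ (-γ) * Real.exp (-α * t - β / t)
        ≤ t ^ (-γ) * Real.exp (-β / t) :=
          mul_le_mul_of_nonneg_left this (Real.rpow_nonneg ht0.le _)
      _ ≤ γ ^ γ / β ^ γ := hbound t ht0
  · -- on Ioi 1 : bounded by exp (-α t)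
    have hmeas : AEStronglyMeasurable (fun t : ℝ => t ^ (-γ) * Real.exp (-α * t - β / t))
        (volume.restrict (Set.Ioi 1)) :=
      (hcont.mono (fun (x : ℝ) (hx : x ∈ Set.Ioi (1:ℝ)) => (show x ∈ Set.Ioi (0:ℝ) from lt_trans (zero_lt_one' ℝ) hx))).aestronglyMeasurable measurableSet_Ioi
    apply MeasureTheory.Integrable.mono' (g := fun t : ℝ => Real.exp (-α * t))
      (exp_neg_integrableOn_Ioi 1 hα) hmeas
    filter_upwards [ae_restrict_mem measurableSet_Ioi] with t ht
    have ht1 : (1:ℝ) < t := ht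
    have ht0 : (0:ℝ) < t := lt_trans one_pos ht1
    rw [Real.norm_of_nonneg (hnonneg t ht0)]
    have h1 : t ^ (-γ) ≤ 1 :=
      Real.rpow_le_one_of_one_le_of_nonpos ht1.le (by linarith)
    have h2 : Real.exp (-α * t - β / t) ≤ Real.exp (-α * t) := by
      apply Real.exp_le_exp.2
      have : 0 ≤ β / t := (div_pos hβ ht0).le
      linarith
    calc t ^ (-γ) * Real.exp (-α * t - β / t)
        ≤ 1 * Real.exp (-α * t) :=
          mul_le_mul h1 h2 (Real.exp_pos _).le one_pos.le
      _ = Real.exp (-α * t) := one_mul _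

/-- For every `γ ∈ [1,∞)` there is `c_γ > 0` such that for all `α, β > 0`
with `αβ ≥ 1`,
`∫₀^∞ t^{−γ} e^{−αt − β/t} dt ≥ c_γ · (α/β)^{(γ−1)/2} · (αβ)^{−1/4} · e^{−2√(αβ)}`. -/
theorem bessel_integral_lower_bound
    (γ : ℝ) (hγ : 1 ≤ γ) :
    ∃ c : ℝ, 0 < c ∧ ∀ α β : ℝ, 0 < α → 0 < β → 1 ≤ α * β →
      c * (α / β) ^ ((γ - 1) / 2) * (α * β) ^ (-(1:ℝ)/4) *
          Real.exp (-2 * Real.sqrt (α * β)) ≤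
        ∫ t in Set.Ioi (0:ℝ), t ^ (-γ) * Real.exp (-α * t - β / t) := by
  refine ⟨(2:ℝ) ^ (-γ) * Real.exp (-1), by positivity, ?_⟩
  intro α β hα hβ hαβ
  set a := Real.sqrt α with ha_def
  set b := Real.sqrt β with hb_def
  have ha : 0 < a := Real.sqrt_pos.2 hα
  have hb : 0 < b := Real.sqrt_pos.2 hβ
  have ha2 : a ^ 2 = α := Real.sq_sqrt hα.le
  have hb2 : b ^ 2 = β := Real.sq_sqrt hβ.le
  have hs_eq : Real.sqrt (α * β) = a * b := Real.sqrt_mul hα.le β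
  have hab1 : 1 ≤ a * b := by
    rw [← hs_eq]; exact Real.one_le_sqrt.2 hαβ
  have hab : 0 < a * b := lt_of_lt_of_le one_pos hab1
  set t₀ : ℝ := b / a with ht₀_def
  have ht₀ : 0 < t₀ := div_pos hb ha
  set ε : ℝ := (Real.sqrt (a * b))⁻¹ with hε_def
  have hsab : 0 < Real.sqrt (a * b) := Real.sqrt_pos.2 hab
  have hε : 0 < ε := inv_pos.2 hsab
  have hsab1 : 1 ≤ Real.sqrt (a * b) := Real.one_le_sqrt.2 hab1
  have hε1 : ε ≤ 1 := by
    rw [hε_def]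
    exact inv_le_one_of_one_le₀ hsab1
  have hε2 : ε ^ 2 * (a * b) = 1 := by
    rw [hε_def, ← Real.sqrt_inv, Real.sq_sqrt (by positivity)]
    field_simp
  set t₁ : ℝ := t₀ * (1 + ε) with ht₁_def
  have ht₀t₁ : t₀ ≤ t₁ := by
    rw [ht₁_def]; nlinarith
  have ht₁2 : t₁ ≤ 2 * t₀ := by
    rw [ht₁_def]; nlinarith
  -- pointwise lower bound on Icc t₀ t₁
  set C : ℝ := (2 * t₀) ^ (-γ) * Real.exp (-(2 * (a * b) + 1)) with hC_def
  have hpt : ∀ t ∈ Set.Icc t₀ t₁, C ≤ t ^ (-γ) * Real.exp (-α * t - β / t) := by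
    intro t ht
    have ht0 : 0 < t := lt_of_lt_of_le ht₀ ht.1
    have h1 : (2 * t₀) ^ (-γ) ≤ t ^ (-γ) := by
      apply Real.rpow_le_rpow_of_nonpos ht0 (le_trans ht.2 ht₁2) (by linarith)
    have hat : b ≤ a * t := by
      have := ht.1
      rw [ht₀_def] at this
      calc b = a * (b / a) := by field_simp
        _ ≤ a * t := mul_le_mul_of_nonneg_left this ha.le
    have hat2 : a * t - b ≤ b * ε := by
      have h := ht.2
      rw [ht₁_def, ht₀_def] at h
      have : a * t ≤ a * (b / a * (1 + ε)) := mul_le_mul_of_nonneg_left h ha.le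
      have he : a * (b / a * (1 + ε)) = b + b * ε := by field_simp
      linarith [he ▸ this]
    have hsq : (a * t - b) ^ 2 ≤ β * ε ^ 2 := by
      have : (a * t - b) ^ 2 ≤ (b * ε) ^ 2 := by
        apply sq_le_sq' _ hat2
        nlinarith
      calc (a * t - b) ^ 2 ≤ (b * ε) ^ 2 := this
        _ = β * ε ^ 2 := by rw [← hb2]; ring
    have hkey : α * t + β / t ≤ 2 * (a * b) + 1 := by
      have hiden : α * t + β / t = 2 * (a * b) + (a * t - b) ^ 2 / t := by
        field_simp
        linear_combination (-(t^2)) * ha2 - hb2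
      rw [hiden]
      have hdiv : (a * t - b) ^ 2 / t ≤ β * ε ^ 2 / t₀ :=
        div_le_div₀ (by positivity) hsq ht₀ ht.1
      have h2 : β * ε ^ 2 / t₀ = 1 := by
        have he : β * ε ^ 2 / t₀ = ε ^ 2 * (a * b) := by
          rw [ht₀_def, ← hb2]
          field_simp
        rw [he, hε2]
      linarith
    have h2 : Real.exp (-(2 * (a * b) + 1)) ≤ Real.exp (-α * t - β / t) := by
      apply Real.exp_le_exp.2
      linarith
    calc C = (2 * t₀) ^ (-γ) * Real.exp (-(2 * (a * b) + 1)) := rfl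
      _ ≤ t ^ (-γ) * Real.exp (-α * t - β / t) :=
        mul_le_mul h1 h2 (Real.exp_pos _).le (Real.rpow_nonneg (by positivity) _)
  -- integral lower bound
  have hint : IntegrableOn (fun t : ℝ => t ^ (-γ) * Real.exp (-α * t - β / t))
      (Set.Ioi 0) := integrable_bessel γ α β hγ hα hβ
  have hsub : Set.Icc t₀ t₁ ⊆ Set.Ioi (0:ℝ) := fun x hx => lt_of_lt_of_le ht₀ hx.1
  have step1 : C * (t₁ - t₀) ≤ ∫ t in Set.Icc t₀ t₁,
      t ^ (-γ) * Real.exp (-α * t - β / t) := by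
    have := MeasureTheory.setIntegral_ge_of_const_le (μ := volume)
      (s := Set.Icc t₀ t₁) measurableSet_Icc (measure_Icc_lt_top).ne hpt
      (hint.mono_set hsub)
    rw [measureReal_def, Real.volume_Icc, ENNReal.toReal_ofReal (by linarith), smul_eq_mul] at this
    linarith
  have step2 : (∫ t in Set.Icc t₀ t₁, t ^ (-γ) * Real.exp (-α * t - β / t)) ≤
      ∫ t in Set.Ioi (0:ℝ), t ^ (-γ) * Real.exp (-α * t - β / t) := by
    apply MeasureTheory.setIntegral_mono_set hint
    · filter_upwards [ae_restrict_mem measurableSet_Ioi] with t ht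
      exact mul_nonneg (Real.rpow_nonneg (le_of_lt ht) _) (Real.exp_pos _).le
    · exact HasSubset.Subset.eventuallyLE hsub
  -- algebra: LHS = C * (t₁ - t₀)
  have halg : (2:ℝ) ^ (-γ) * Real.exp (-1) * (α / β) ^ ((γ - 1) / 2) *
      (α * β) ^ (-(1:ℝ)/4) * Real.exp (-2 * Real.sqrt (α * β)) = C * (t₁ - t₀) := by
    have h4 : (α * β) ^ (-(1:ℝ)/4) = ε := by
      rw [hε_def, ← hs_eq, Real.sqrt_eq_rpow, Real.sqrt_eq_rpow,
        ← Real.rpow_mul (by positivity : (0:ℝ) ≤ α * β) ((1:ℝ)/2) ((1:ℝ)/2),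
        ← Real.rpow_neg (by positivity)]
      norm_num
    have ht₀rpow : t₀ = (β / α) ^ ((1:ℝ)/2) := by
      rw [ht₀_def, ha_def, hb_def, ← Real.sqrt_div hβ.le, Real.sqrt_eq_rpow]
    have h5 : (α / β) ^ ((γ - 1) / 2) = t₀ ^ (1 - γ) := by
      rw [ht₀rpow, ← Real.rpow_mul (by positivity)]
      rw [show α / β = (β / α)⁻¹ by rw [inv_div]]
      rw [Real.inv_rpow (by positivity), ← Real.rpow_neg (by positivity)]
      ring_nf
    have h6 : t₀ ^ (1 - γ) = t₀ * t₀ ^ (-γ) := by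
      rw [show (1 : ℝ) - γ = 1 + (-γ) by ring, Real.rpow_add ht₀, Real.rpow_one]
    have h7 : (2 * t₀) ^ (-γ) = 2 ^ (-γ) * t₀ ^ (-γ) :=
      Real.mul_rpow (by norm_num) ht₀.le
    have h8 : Real.exp (-(2 * (a * b) + 1)) =
        Real.exp (-2 * (a * b)) * Real.exp (-1) := by
      rw [← Real.exp_add]; ring_nf
    have h9 : t₁ - t₀ = t₀ * ε := by rw [ht₁_def]; ring
    rw [h4, h5, h6, hC_def, h7, h8, h9, hs_eq]
    ring
  rw [halg]
  exact le_trans step1 step2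
end

section
/- Let A : (0,∞) → (0,∞) be continuous and differentiable with A'(r)/A(r) → μ̄ as r → +∞, where μ̄ ∈ ℝ, and let V(r) = ∫₀^r A(s) ds (assumed finite for each r > 0). Then ln(1 + V(r))/r → max{μ̄, 0} as r → +∞. -/
open Filter Real MeasureTheory intervalIntegral

/-- MVT: integrated bound on a function from a bound on its derivative. -/
private lemma mvt_abs_bound {g φ : ℝ → ℝ} {R μ δ : ℝ}
    (hg : ∀ x, R ≤ x → HasDerivAt g (φ x) x)
    (hb : ∀ x, R ≤ x → |φ x - μ| ≤ δ) :
    ∀ r, R ≤ r → |g r - g R - μ * (r - R)| ≤ δ * (r - R) := by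
  intro r hr
  have key := Convex.norm_image_sub_le_of_norm_hasDerivWithin_le
    (f := fun x => g x - μ * x) (f' := fun x => φ x - μ) (C := δ) (s := Set.Icc R r)
    (fun x hx => by
      have : HasDerivAt (fun x => g x - μ * x) (φ x - μ) x := by
        have h := (hg x hx.1).sub ((hasDerivAt_id' x).const_mul μ)
        rw [mul_one] at h
        exact h
      exact this.hasDerivWithinAt)
    (fun x hx => hb x hx.1) (convex_Icc R r)
    ⟨le_refl R, hr⟩ ⟨hr, le_refl r⟩
  have h1 : |(g r - μ * r) - (g R - μ * R)| ≤ δ * |r - R| := key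
  rw [abs_of_nonneg (by linarith : (0:ℝ) ≤ r - R)] at h1
  calc |g r - g R - μ * (r - R)| = |(g r - μ * r) - (g R - μ * R)| := by ring_nf
    _ ≤ δ * (r - R) := h1

/-- The interval integral of `exp (c * (s - R))`. -/
private lemma exp_shift_integral {c : ℝ} (hc : c ≠ 0) (R r : ℝ) :
    ∫ s in R..r, Real.exp (c * (s - R)) = (Real.exp (c * (r - R)) - 1) / c := by
  have hF : ∀ x ∈ Set.uIcc R r, HasDerivAt (fun s => Real.exp (c * (s - R)) / c)
      (Real.exp (c * (x - R))) x := by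
    intro x _
    have h1 : HasDerivAt (fun s : ℝ => c * (s - R)) c x := by
      simpa using ((hasDerivAt_id x).sub_const R).const_mul c
    have h2 := h1.exp
    have h3 := h2.div_const c
    simpa [mul_div_assoc, mul_div_cancel_right₀, hc] using h3
  have hint : IntervalIntegrable (fun s => Real.exp (c * (s - R))) volume R r :=
    (by continuity : Continuous fun s => Real.exp (c * (s - R))).intervalIntegrable R r
  rw [intervalIntegral.integral_eq_sub_of_hasDerivAt hF hint]
  simp [sub_div]

/-- The volume is nonnegative. -/
private lemma V_nonneg (A : ℝ → ℝ) (hApos : ∀ r, 0 < r → 0 < A r) {r : ℝ} (hr : 0 ≤ r) :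
    0 ≤ ∫ s in (0:ℝ)..r, A s := by
  apply intervalIntegral.integral_nonneg_of_ae_restrict hr
  have hne : ∀ᵐ x : ℝ, x ≠ 0 := by
    refine ae_iff.mpr ?_
    have : {x : ℝ | ¬ x ≠ 0} = {0} := by ext x; simp
    rw [this]; exact measure_singleton 0
  filter_upwards [ae_restrict_mem measurableSet_Icc, ae_restrict_of_ae hne] with x hx hx0
  exact (hApos x (lt_of_le_of_ne hx.1 (Ne.symm hx0))).le

/-- Exponential bounds on `A` from the limit of the logarithmic derivative. -/
private lemma A_exp_bounds (A : ℝ → ℝ) (μbar : ℝ)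
    (hApos : ∀ r, 0 < r → 0 < A r)
    (hAdiff : ∀ r, 0 < r → DifferentiableAt ℝ A r)
    (hlog : Tendsto (fun r => deriv A r / A r) atTop (nhds μbar))
    {δ : ℝ} (hδ : 0 < δ) :
    ∃ R, 1 ≤ R ∧ ∀ r, R ≤ r →
      A R * Real.exp ((μbar - δ) * (r - R)) ≤ A r ∧
      A r ≤ A R * Real.exp ((μbar + δ) * (r - R)) := by
  have hev : ∀ᶠ x in atTop, dist (deriv A x / A x) μbar < δ :=
    Metric.tendsto_nhds.mp hlog δ hδ
  obtain ⟨R₀, hR₀⟩ := eventually_atTop.mp hev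
  refine ⟨max R₀ 1, le_max_right _ _, ?_⟩
  set R := max R₀ 1 with hRdef
  have hR1 : (1:ℝ) ≤ R := le_max_right _ _
  have hR0 : (0:ℝ) < R := lt_of_lt_of_le one_pos hR1
  have hpos : ∀ x, R ≤ x → 0 < x := fun x hx => lt_of_lt_of_le hR0 hx
  have hderiv : ∀ x, R ≤ x → HasDerivAt (fun y => Real.log (A y)) (deriv A x / A x) x :=
    fun x hx => ((hAdiff x (hpos x hx)).hasDerivAt).log (hApos x (hpos x hx)).ne'
  have hb : ∀ x, R ≤ x → |deriv A x / A x - μbar| ≤ δ := by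
    intro x hx
    have := hR₀ x (le_trans (le_max_left _ _) hx)
    rw [Real.dist_eq] at this
    exact this.le
  have hmvt := mvt_abs_bound hderiv hb
  intro r hr
  have h := abs_le.mp (hmvt r hr)
  have hAr := hApos r (hpos r hr)
  have hAR := hApos R hR0
  have e1 : (μbar - δ) * (r - R) = μbar * (r - R) - δ * (r - R) := by ring
  have e2 : (μbar + δ) * (r - R) = μbar * (r - R) + δ * (r - R) := by ring
  constructor
  · have hle : Real.log (A R) + (μbar - δ) * (r - R) ≤ Real.log (A r) := by
      rw [e1]; linarith [h.1]
    calc A R * Real.exp ((μbar - δ) * (r - R))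
        = Real.exp (Real.log (A R) + (μbar - δ) * (r - R)) := by
          rw [Real.exp_add, Real.exp_log hAR]
      _ ≤ Real.exp (Real.log (A r)) := Real.exp_le_exp.mpr hle
      _ = A r := Real.exp_log hAr
  · have hle : Real.log (A r) ≤ Real.log (A R) + (μbar + δ) * (r - R) := by
      rw [e2]; linarith [h.2]
    calc A r = Real.exp (Real.log (A r)) := (Real.exp_log hAr).symm
      _ ≤ Real.exp (Real.log (A R) + (μbar + δ) * (r - R)) := Real.exp_le_exp.mpr hle
      _ = A R * Real.exp ((μbar + δ) * (r - R)) := by rw [Real.exp_add, Real.exp_log hAR]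

/-- If `A : (0,∞) → (0,∞)` is continuous and differentiable with
logarithmic derivative `A'/A → μ̄` at infinity, and `V(r) = ∫₀^r A(s) ds` is finite
for each `r > 0`, then `ln(1 + V(r))/r → max{μ̄, 0}` as `r → +∞`. -/
theorem log_growth_rate_of_volume
    (A : ℝ → ℝ) (μbar : ℝ)
    (hApos : ∀ r, 0 < r → 0 < A r)
    (hAcont : ContinuousOn A (Set.Ioi 0))
    (hAdiff : ∀ r, 0 < r → DifferentiableAt ℝ A r)
    (hlog : Tendsto (fun r => deriv A r / A r) atTop (nhds μbar))
    -- V(r) = ∫₀^r A(s) ds is finite for each r > 0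
    (hAint : ∀ r, 0 < r → IntervalIntegrable A volume 0 r) :
    Tendsto (fun r => Real.log (1 + ∫ s in (0:ℝ)..r, A s) / r)
      atTop (nhds (max μbar 0)) := by
  set L := max μbar 0 with hL
  clear_value L
  set V : ℝ → ℝ := fun r => ∫ s in (0:ℝ)..r, A s with hV
  clear_value V
  -- Upper bound claim
  have upper : ∀ ε : ℝ, 0 < ε → ∀ᶠ r in atTop, Real.log (1 + V r) / r < L + ε := by
    intro ε hε
    have hδ : (0:ℝ) < ε / 2 := by linarith
    obtain ⟨R, hR1, hbounds⟩ := A_exp_bounds A μbar hApos hAdiff hlog hδ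
    have hR0 : (0:ℝ) < R := lt_of_lt_of_le one_pos hR1
    set c : ℝ := L + ε / 2 with hc
    clear_value c
    have hc0 : 0 < c := by
      have h0 : (0:ℝ) ≤ L := by rw [hL]; exact le_max_right _ _
      rw [hc]; linarith
    have hμc : μbar + ε / 2 ≤ c := by
      have h1 : μbar ≤ L := by rw [hL]; exact le_max_left _ _
      rw [hc]; linarith
    set M : ℝ := 1 + V R + A R / c with hM
    clear_value M
    have hVR : 0 ≤ V R := by simp only [hV]; exact V_nonneg A hApos hR0.le
    have hARc : 0 < A R / c := div_pos (hApos R hR0) hc0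
    have hM1 : (1:ℝ) ≤ M := by rw [hM]; linarith
    have hM0 : (0:ℝ) < M := lt_of_lt_of_le one_pos hM1
    have key : ∀ r, R ≤ r → Real.log (1 + V r) / r ≤ Real.log M / r + c := by
      intro r hr
      have hr0 : (0:ℝ) < r := lt_of_lt_of_le hR0 hr
      -- pointwise bound A s ≤ A R * exp (c * (s - R)) on [R, r]
      have hpt : ∀ s ∈ Set.Icc R r, A s ≤ A R * Real.exp (c * (s - R)) := by
        intro s hs
        refine le_trans (hbounds s hs.1).2 ?_
        apply mul_le_mul_of_nonneg_left _ (hApos R hR0).le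
        apply Real.exp_le_exp.mpr
        have hsR : 0 ≤ s - R := by linarith [hs.1]
        nlinarith
      have hintRr : IntervalIntegrable A volume R r := by
        apply (hAint r hr0).mono_set
        rw [Set.uIcc_of_le hr, Set.uIcc_of_le hr0.le]
        exact Set.Icc_subset_Icc hR0.le le_rfl
      have hintexp : IntervalIntegrable (fun s => A R * Real.exp (c * (s - R))) volume R r :=
        (continuous_const.mul
          ((continuous_const.mul (continuous_id.sub continuous_const)).rexp)).intervalIntegrable R r
      have hsplit : V r = V R + ∫ s in R..r, A s := by
        simp only [hV]
        exact (intervalIntegral.integral_add_adjacent_intervals (hAint R hR0) hintRr).symm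
      have hmono : (∫ s in R..r, A s) ≤ ∫ s in R..r, A R * Real.exp (c * (s - R)) :=
        intervalIntegral.integral_mono_on hr hintRr hintexp hpt
      have hcalc : (∫ s in R..r, A R * Real.exp (c * (s - R)))
          = A R * ((Real.exp (c * (r - R)) - 1) / c) := by
        rw [intervalIntegral.integral_const_mul, exp_shift_integral hc0.ne' R r]
      have hexp1 : (1:ℝ) ≤ Real.exp (c * (r - R)) := by
        apply Real.one_le_exp
        have : 0 ≤ r - R := by linarith
        positivity
      have hVbound : 1 + V r ≤ M * Real.exp (c * (r - R)) := by
        have h1 : (∫ s in R..r, A s) ≤ A R / c * Real.exp (c * (r - R)) := by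
          rw [hcalc] at hmono
          refine le_trans hmono ?_
          rw [div_mul_eq_mul_div, mul_div_assoc]
          apply mul_le_mul_of_nonneg_left _ (hApos R hR0).le
          apply div_le_div_of_nonneg_right _ hc0.le
          · linarith
        have h2 : 1 + V R ≤ (1 + V R) * Real.exp (c * (r - R)) := by
          nlinarith
        rw [hsplit, hM]
        nlinarith
      have hpos1 : (0:ℝ) < 1 + V r := by
        have h := V_nonneg A hApos hr0.le
        simp only [hV]
        linarith
      have hlog1 : Real.log (1 + V r) ≤ Real.log M + c * (r - R) := by
        calc Real.log (1 + V r) ≤ Real.log (M * Real.exp (c * (r - R))) :=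
              Real.log_le_log hpos1 hVbound
          _ = Real.log M + c * (r - R) := by
              rw [Real.log_mul hM0.ne' (Real.exp_ne_zero _), Real.log_exp]
      have hlog2 : Real.log (1 + V r) ≤ Real.log M + c * r := by
        have : c * (r - R) ≤ c * r := by nlinarith
        linarith
      calc Real.log (1 + V r) / r ≤ (Real.log M + c * r) / r := by
            apply div_le_div_of_nonneg_right hlog2 hr0.le |>.trans_eq rfl
        _ = Real.log M / r + c := by field_simp
    have htend : Tendsto (fun r : ℝ => Real.log M / r) atTop (nhds 0) :=
      tendsto_const_nhds.div_atTop tendsto_id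
    have hev : ∀ᶠ r in atTop, Real.log M / r < ε / 2 :=
      htend.eventually_lt_const (by linarith : (0:ℝ) < ε / 2)
    filter_upwards [eventually_ge_atTop R, hev] with r hr hsmall
    have := key r hr
    have : Real.log (1 + V r) / r < ε / 2 + c := by linarith
    simp only [hc] at this
    linarith
  -- Lower bound claim
  have lower : ∀ ε : ℝ, 0 < ε → ∀ᶠ r in atTop, L - ε < Real.log (1 + V r) / r := by
    intro ε hε
    rcases le_or_gt μbar 0 with hμ | hμ
    · -- L = 0, use nonnegativity
      have hL0 : L = 0 := by rw [hL]; exact max_eq_right hμ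
      filter_upwards [eventually_ge_atTop (1:ℝ)] with r hr
      have hr0 : (0:ℝ) < r := lt_of_lt_of_le one_pos hr
      have hVr : 0 ≤ V r := by simp only [hV]; exact V_nonneg A hApos hr0.le
      have : 0 ≤ Real.log (1 + V r) := Real.log_nonneg (by linarith)
      have : 0 ≤ Real.log (1 + V r) / r := div_nonneg this hr0.le
      rw [hL0]; linarith
    · -- L = μbar > 0
      have hLμ : L = μbar := by rw [hL]; exact max_eq_left hμ.le
      set δ : ℝ := min (ε / 2) (μbar / 2) with hδdef
      clear_value δ
      have hδ : 0 < δ := by rw [hδdef]; exact lt_min (by linarith) (by linarith)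
      have hδε : δ ≤ ε / 2 := by rw [hδdef]; exact min_le_left _ _
      set a : ℝ := μbar - δ with ha
      clear_value a
      have ha0 : 0 < a := by
        have h1 : δ ≤ μbar / 2 := by rw [hδdef]; exact min_le_right _ _
        rw [ha]; linarith
      obtain ⟨R, hR1, hbounds⟩ := A_exp_bounds A μbar hApos hAdiff hlog hδ
      have hR0 : (0:ℝ) < R := lt_of_lt_of_le one_pos hR1
      set K : ℝ := A R / (2 * a) with hK
      clear_value K
      have hK0 : 0 < K := by rw [hK]; exact div_pos (hApos R hR0) (by linarith)
      set C : ℝ := Real.log K - a * R with hC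
      clear_value C
      have htend : Tendsto (fun r : ℝ => C / r) atTop (nhds 0) :=
        tendsto_const_nhds.div_atTop tendsto_id
      have hev : ∀ᶠ r in atTop, -(ε / 2) < C / r :=
        htend.eventually_const_lt (by linarith : -(ε / 2) < (0:ℝ))
      filter_upwards [eventually_ge_atTop (R + Real.log 2 / a), hev] with r hrR hsmall
      have hr : R ≤ r := by
        have : 0 ≤ Real.log 2 / a := div_nonneg (Real.log_nonneg one_le_two) ha0.le
        linarith
      have hr0 : (0:ℝ) < r := lt_of_lt_of_le hR0 hr
      -- exp (a * (r - R)) ≥ 2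
      have hexp2 : (2:ℝ) ≤ Real.exp (a * (r - R)) := by
        have h1 : Real.log 2 ≤ a * (r - R) := by
          have h2 : Real.log 2 / a ≤ r - R := by linarith
          calc Real.log 2 = a * (Real.log 2 / a) := by field_simp
            _ ≤ a * (r - R) := mul_le_mul_of_nonneg_left h2 ha0.le
        calc (2:ℝ) = Real.exp (Real.log 2) := (Real.exp_log two_pos).symm
          _ ≤ Real.exp (a * (r - R)) := Real.exp_le_exp.mpr h1
      -- lower bound on the integral
      have hpt : ∀ s ∈ Set.Icc R r, A R * Real.exp (a * (s - R)) ≤ A s := by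
        intro s hs
        rw [ha]
        exact (hbounds s hs.1).1
      have hintRr : IntervalIntegrable A volume R r := by
        apply (hAint r hr0).mono_set
        rw [Set.uIcc_of_le hr, Set.uIcc_of_le hr0.le]
        exact Set.Icc_subset_Icc hR0.le le_rfl
      have hintexp : IntervalIntegrable (fun s => A R * Real.exp (a * (s - R))) volume R r :=
        (continuous_const.mul
          ((continuous_const.mul (continuous_id.sub continuous_const)).rexp)).intervalIntegrable R r
      have hmono : (∫ s in R..r, A R * Real.exp (a * (s - R))) ≤ ∫ s in R..r, A s :=
        intervalIntegral.integral_mono_on hr hintexp hintRr hpt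
      have hcalc : (∫ s in R..r, A R * Real.exp (a * (s - R)))
          = A R * ((Real.exp (a * (r - R)) - 1) / a) := by
        rw [intervalIntegral.integral_const_mul, exp_shift_integral ha0.ne' R r]
      have hsplit : V r = V R + ∫ s in R..r, A s := by
        simp only [hV]
        exact (intervalIntegral.integral_add_adjacent_intervals (hAint R hR0) hintRr).symm
      have hVR : 0 ≤ V R := by simp only [hV]; exact V_nonneg A hApos hR0.le
      have hVlow : K * Real.exp (a * (r - R)) ≤ V r := by
        have h1 : A R * ((Real.exp (a * (r - R)) - 1) / a) ≤ V r := by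
          rw [hsplit, ← hcalc]; linarith
        have h2 : Real.exp (a * (r - R)) / (2 * a) ≤ (Real.exp (a * (r - R)) - 1) / a := by
          rw [div_le_div_iff₀ (by linarith) ha0]
          nlinarith
        calc K * Real.exp (a * (r - R)) = A R * (Real.exp (a * (r - R)) / (2 * a)) := by
              rw [hK]; ring
          _ ≤ A R * ((Real.exp (a * (r - R)) - 1) / a) :=
              mul_le_mul_of_nonneg_left h2 (hApos R hR0).le
          _ ≤ V r := h1
      have hKe0 : 0 < K * Real.exp (a * (r - R)) := mul_pos hK0 (Real.exp_pos _)
      have hVr0 : 0 < V r := lt_of_lt_of_le hKe0 hVlow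
      have hlog1 : Real.log K + a * (r - R) ≤ Real.log (1 + V r) := by
        calc Real.log K + a * (r - R) = Real.log (K * Real.exp (a * (r - R))) := by
              rw [Real.log_mul hK0.ne' (Real.exp_ne_zero _), Real.log_exp]
          _ ≤ Real.log (V r) := Real.log_le_log hKe0 hVlow
          _ ≤ Real.log (1 + V r) := Real.log_le_log hVr0 (by linarith)
      have hfinal : C / r + a ≤ Real.log (1 + V r) / r := by
        have heq : (Real.log K + a * (r - R)) / r = C / r + a := by
          rw [hC]; field_simp; ring
        rw [← heq]
        exact div_le_div_of_nonneg_right hlog1 hr0.le |>.trans_eq rfl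
      have : μbar - ε < C / r + a := by
        rw [ha]
        linarith
      rw [hLμ]
      linarith
  rw [Metric.tendsto_nhds]
  intro ε hε
  filter_upwards [upper (ε / 2) (by linarith), lower (ε / 2) (by linarith)] with r hu hl
  rw [Real.dist_eq, abs_lt]
  constructor <;> simp only [hV] at hu hl <;> [linarith; linarith]
end
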